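/- arXiv:1501.07550 — 4 statements merged into one kernel-verified Lean document; each statement's English description precedes it below -/
import Mathlib

section
/- Let M be a positive integer and suppose u₁, u₂, … ∈ Z² is a sequence satisfying ‖u_{i+1} − u_i‖₂ ≤ M for all i ∈ N. Then for each k ∈ N there exists a set X ⊆ N with cardinality |X| = k such that {u_i : i ∈ X} is contained in a single affine line of R². -/
open Set

/-- Euclidean norm on `Fin n → ℝ`. -/
noncomputable def euclNorm {n : ℕ} (x : Fin n → ℝ) : ℝ := Real.sqrt (∑ i, (x i) ^ 2)

/-- Coordinatewise cast of an integer vector to a real vector. -/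
def zr {n : ℕ} (x : Fin n → ℤ) : Fin n → ℝ := fun i => (x i : ℝ)

/-!
If every line met the sequence in fewer than `k` indices, then for every nonzero integer
functional `v` the integer sequence `v ⬝ᵥ u i` would have fibres of size `< k`. It therefore
leaves every bounded window, and since its steps are bounded it cannot change sign afterwards:
it is eventually positive or eventually negative. Running the Stern–Brocot mediant algorithm
on the eventually positive functionals yields eventually positive `p`, `q` with
`det (p, q) = ± 1`, lying in opposite quadrants, with arbitrarily large entries. By Cramer's
rule a unit vector is then `α • p + β • q` with `α, β ≥ 0` and `α` as large as any entry.
But a sequence that is bounded below with fibres `< k` exceeds about `T / k` somewhere in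
`[0, T]`, while the coordinate along a unit vector grows by at most `M` per step; so `α ≤ k M`.
-/

open Filter

def FibersCardLT {α β : Type*} (k : ℕ) (g : α → β) : Prop :=
  ∀ (F : Finset α) (c : β), (∀ i ∈ F, g i = c) → F.card < k

namespace FibersCardLT

variable {α β : Type*} {k : ℕ} {g : α → β}

theorem card_le_mul_card [DecidableEq β] (hg : FibersCardLT k g) {F : Finset α} {S : Finset β}
    (hFS : ∀ i ∈ F, g i ∈ S) : F.card ≤ k * S.card :=
  Finset.card_le_mul_card_image_of_maps_to hFS k fun c _ =>
    (hg _ c fun _ hi => (Finset.mem_filter.mp hi).2).le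

theorem finite_preimage_singleton (hg : FibersCardLT k g) (c : β) : (g ⁻¹' {c}).Finite := by
  by_contra hinf
  obtain ⟨F, hFc, hFk⟩ := Set.Infinite.exists_subset_card_eq hinf k
  exact (hg F c fun i hi => hFc hi).ne hFk

theorem eventually_lt_abs {g : ℕ → ℤ} (hg : FibersCardLT k g) (W : ℤ) :
    ∀ᶠ i in atTop, W < |g i| := by
  have hfin : (g ⁻¹' Icc (-W) W).Finite :=
    (Set.finite_Icc (-W) W).preimage' fun c _ => hg.finite_preimage_singleton c
  rw [← Nat.cofinite_eq_atTop]
  filter_upwards [hfin.eventually_cofinite_notMem] with i hi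
  by_contra! h
  exact hi (abs_le.mp h)

theorem eventually_pos_or_eventually_neg {g : ℕ → ℤ} (hg : FibersCardLT k g) {B : ℤ}
    (hB : ∀ i, |g (i + 1) - g i| ≤ B) :
    (∀ᶠ i in atTop, 0 < g i) ∨ ∀ᶠ i in atTop, g i < 0 := by
  obtain ⟨N, hN⟩ := eventually_atTop.mp (hg.eventually_lt_abs B)
  -- beyond `N` a step of size at most `B` cannot jump over the window `[-B, B]`
  have hsign : ∀ i ≥ N, (0 < g i ↔ 0 < g N) := by
    intro i hi
    induction i, hi using Nat.le_induction with
    | base => rfl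
    | succ i hi ih =>
      have h1 := abs_le.mp (hB i)
      have h2 := lt_abs.mp (hN i hi)
      have h3 := lt_abs.mp (hN (i + 1) (by omega))
      rw [← ih]
      omega
  have hB0 : 0 ≤ B := (abs_nonneg _).trans (hB 0)
  by_cases hpos : 0 < g N
  · exact .inl (eventually_atTop.mpr ⟨N, fun i hi => (hsign i hi).mpr hpos⟩)
  · refine .inr (eventually_atTop.mpr ⟨N, fun i hi => ?_⟩)
    have := (hsign i hi).not.mpr hpos
    have := lt_abs.mp (hN i hi)
    omega

theorem exists_add_one_le_mul {g : ℕ → ℤ} (hg : FibersCardLT k g) {A : ℤ}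
    (hA : ∀ i, -A ≤ g i) (T : ℕ) : ∃ j ≤ T, (T + 1 : ℤ) ≤ k * (g j + A + 1) := by
  obtain ⟨j, hjT, hjmax⟩ :=
    (Finset.range (T + 1)).exists_max_image g ⟨0, Finset.mem_range.mpr T.succ_pos⟩
  refine ⟨j, Nat.lt_succ_iff.mp (Finset.mem_range.mp hjT), ?_⟩
  have hcard := hg.card_le_mul_card (S := Finset.Icc (-A) (g j)) fun i hi =>
    Finset.mem_Icc.mpr ⟨hA i, hjmax i hi⟩
  rw [Finset.card_range, Int.card_Icc] at hcard
  have := hA j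
  zify at hcard
  rw [Int.toNat_of_nonneg (by omega)] at hcard
  linarith

theorem le_mul_of_mul_le {g : ℕ → ℤ} (hg : FibersCardLT k g) {A α c : ℤ} {M : ℕ}
    (hA : ∀ i, -A ≤ g i) (hgrowth : ∀ i, α * g i ≤ c + M * i) : α ≤ k * M := by
  by_contra! hα
  set T := (k * c + k * α * (A + 1)).toNat
  obtain ⟨j, hjT, hj⟩ := hg.exists_add_one_le_mul hA T
  have hT : k * c + k * α * (A + 1) ≤ T := Int.self_le_toNat _
  have hMj : (M : ℤ) * j ≤ M * T := by gcongr
  have hk : (0 : ℤ) ≤ k := by positivity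
  nlinarith [hgrowth j, mul_le_mul_of_nonneg_left hj (show 0 ≤ α by nlinarith)]

end FibersCardLT

theorem le_add_mul_of_sub_le {g : ℕ → ℤ} {B : ℤ} (hg : ∀ i, g (i + 1) - g i ≤ B) (i : ℕ) :
    g i ≤ g 0 + B * i := by
  induction i with
  | zero => simp
  | succ i ih => push_cast; linarith [hg i]

theorem abs_dotProduct_le {ι R : Type*} [Fintype ι] [CommRing R] [LinearOrder R]
    [IsStrictOrderedRing R] (v : ι → R) {d : ι → R} {M : R} (hd : ∀ j, |d j| ≤ M) :
    |v ⬝ᵥ d| ≤ (∑ j, |v j|) * M := by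
  rw [dotProduct, Finset.sum_mul]
  refine (Finset.abs_sum_le_sum_abs _ _).trans (Finset.sum_le_sum fun j _ => ?_)
  rw [abs_mul]
  exact mul_le_mul_of_nonneg_left (hd j) (abs_nonneg _)

theorem exists_forall_neg_le_of_eventually_pos {g : ℕ → ℤ} (hg : ∀ᶠ i in atTop, 0 < g i) :
    ∃ A, ∀ i, -A ≤ g i := by
  obtain ⟨b, hb⟩ :=
    (isBoundedUnder_of_eventually_ge (hg.mono fun _ => le_of_lt)).bddBelow_range
  exact ⟨-b, fun i => by simpa using hb ⟨i, rfl⟩⟩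

section BoundedSteps

variable {ι : Type*} [Fintype ι] {u : ℕ → ι → ℤ} {M : ℕ}

theorem eventually_pos_or_eventually_pos_neg (hu : ∀ i j, |(u (i + 1) - u i) j| ≤ M) {k : ℕ}
    {v : ι → ℤ} (hv : FibersCardLT k fun i => v ⬝ᵥ u i) :
    (∀ᶠ i in atTop, 0 < v ⬝ᵥ u i) ∨ ∀ᶠ i in atTop, 0 < -v ⬝ᵥ u i := by
  simp only [neg_dotProduct, Left.neg_pos_iff]
  refine hv.eventually_pos_or_eventually_neg (B := (∑ j, |v j|) * M) fun i => ?_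
  rw [← dotProduct_sub]
  exact abs_dotProduct_le v (hu i)

theorem le_mul_of_sum_abs_smul_add_smul_le_one (hu : ∀ i j, |(u (i + 1) - u i) j| ≤ M)
    {k : ℕ} {p q : ι → ℤ} (hfib : FibersCardLT k fun i => p ⬝ᵥ u i)
    (hp : ∀ᶠ i in atTop, 0 < p ⬝ᵥ u i) (hq : ∀ᶠ i in atTop, 0 < q ⬝ᵥ u i) {α β : ℤ}
    (hβ : 0 ≤ β) (hz : ∑ j, |(α • p + β • q) j| ≤ 1) : α ≤ k * M := by
  obtain ⟨A, hA⟩ := exists_forall_neg_le_of_eventually_pos hp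
  obtain ⟨B, hB⟩ := exists_forall_neg_le_of_eventually_pos hq
  set z := α • p + β • q
  have hsplit : ∀ i, z ⬝ᵥ u i = α * (p ⬝ᵥ u i) + β * (q ⬝ᵥ u i) := fun i => by
    simp only [z, add_dotProduct, smul_dotProduct, smul_eq_mul]
  have hstep : ∀ i, z ⬝ᵥ u (i + 1) - z ⬝ᵥ u i ≤ M := fun i => by
    rw [← dotProduct_sub]
    refine le_of_abs_le ((abs_dotProduct_le z (hu i)).trans ?_)
    exact mul_le_of_le_one_left (by positivity) hz
  refine hfib.le_mul_of_mul_le hA (c := z ⬝ᵥ u 0 + β * B) fun i => ?_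
  nlinarith [le_add_mul_of_sub_le (g := fun i => z ⬝ᵥ u i) hstep i, hsplit i, hB i]

end BoundedSteps

theorem abs_sub_eq_abs_add_abs_of_mul_nonpos {R : Type*} [Ring R] [LinearOrder R]
    [IsStrictOrderedRing R] {a b : R} (h : a * b ≤ 0) : |a - b| = |a| + |b| := by
  rcases mul_nonpos_iff.mp h with ⟨ha, hb⟩ | ⟨ha, hb⟩
  · rw [abs_of_nonneg ha, abs_of_nonpos hb, abs_of_nonneg (sub_nonneg.mpr (hb.trans ha))]; abel
  · rw [abs_of_nonpos ha, abs_of_nonneg hb, abs_of_nonpos (sub_nonpos.mpr (ha.trans hb))]; abel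

theorem one_le_abs_add_abs {v : Fin 2 → ℤ} (hv : v ≠ 0) : 1 ≤ |v 0| + |v 1| := by
  by_contra! h
  have h0 : |v 0| = 0 := by linarith [abs_nonneg (v 0), abs_nonneg (v 1)]
  have h1 : |v 1| = 0 := by linarith [abs_nonneg (v 0), abs_nonneg (v 1)]
  apply hv
  ext j
  fin_cases j
  exacts [abs_eq_zero.mp h0, abs_eq_zero.mp h1]

theorem exists_unimodular_pair (P : (Fin 2 → ℤ) → Prop) (hP : ∀ v ≠ 0, P v ∨ P (-v))
    (n : ℕ) :
    ∃ p q : Fin 2 → ℤ, P p ∧ P q ∧ |p 0 * q 1 - p 1 * q 0| = 1 ∧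
      p 0 * q 0 ≤ 0 ∧ p 1 * q 1 ≤ 0 ∧ n ≤ |p 0| + |p 1| + |q 0| + |q 1| := by
  induction n with
  | zero =>
    have hunit : ∀ j : Fin 2, ∃ s : ℤ, |s| = 1 ∧ P (Pi.single j s) := fun j => by
      rcases hP (Pi.single j 1) (by simp) with h | h
      · exact ⟨1, by simp, h⟩
      · exact ⟨-1, by simp, by rwa [Pi.single_neg]⟩
    obtain ⟨s, hs, hp⟩ := hunit 0
    obtain ⟨t, ht, hq⟩ := hunit 1
    refine ⟨_, _, hp, hq, ?_, by simp, by simp, by positivity⟩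
    simp [abs_mul, hs, ht]
  | succ n ih =>
    obtain ⟨p, q, hp, hq, hdet, h0, h1, hn⟩ := ih
    have hq0 : q ≠ 0 := by rintro rfl; simp at hdet
    have hp0 : p ≠ 0 := by rintro rfl; simp at hdet
    have hpq : p - q ≠ 0 := by
      intro h
      rw [sub_eq_zero.mp h] at hdet
      simp [mul_comm] at hdet
    -- `p` and `q` lie in opposite closed quadrants, so `|p - q|₁ = |p|₁ + |q|₁`
    have hmed0 := abs_sub_eq_abs_add_abs_of_mul_nonpos h0
    have hmed1 := abs_sub_eq_abs_add_abs_of_mul_nonpos h1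
    rcases hP (p - q) hpq with hm | hm
    · have := one_le_abs_add_abs hq0
      refine ⟨p - q, q, hm, hq, ?_, ?_, ?_, ?_⟩ <;> simp only [Pi.sub_apply]
      · rw [← hdet]; ring_nf
      · nlinarith [mul_self_nonneg (q 0)]
      · nlinarith [mul_self_nonneg (q 1)]
      · push_cast; omega
    · have := one_le_abs_add_abs hp0
      refine ⟨p, q - p, hp, by simpa using hm, ?_, ?_, ?_, ?_⟩ <;> simp only [Pi.sub_apply]
      · rw [← hdet]; ring_nf
      · nlinarith [mul_self_nonneg (p 0)]
      · nlinarith [mul_self_nonneg (p 1)]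
      · rw [abs_sub_comm (q 0), abs_sub_comm (q 1)]; push_cast; omega

theorem abs_add_abs_abs_smul_add_abs_smul {p q : Fin 2 → ℤ}
    (hdet : |p 0 * q 1 - p 1 * q 0| = 1) {j : Fin 2} (hj : p j * q j ≤ 0) :
    |(|q j| • p + |p j| • q) 0| + |(|q j| • p + |p j| • q) 1| = 1 := by
  -- coordinate `j` vanishes and the other one is `± det`
  fin_cases j <;>
    simp only [Fin.zero_eta, Fin.mk_one, Fin.isValue, Pi.add_apply, Pi.smul_apply,
      smul_eq_mul] at hj ⊢ <;>
    rcases mul_nonpos_iff.mp hj with ⟨hp, hq⟩ | ⟨hp, hq⟩ <;>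
    simp only [abs_of_nonneg, abs_of_nonpos, hp, hq] <;>
    ring_nf <;> simp only [abs_zero, zero_add, add_zero] <;> rw [← hdet, abs_eq_abs] <;>
    first | (left; ring1) | (right; ring1)

theorem abs_le_euclNorm {n : ℕ} (x : Fin n → ℝ) (j : Fin n) : |x j| ≤ euclNorm x :=
  Real.abs_le_sqrt (Finset.single_le_sum (fun i _ => sq_nonneg (x i)) (Finset.mem_univ j))

theorem zr_ne_zero {n : ℕ} {v : Fin n → ℤ} (hv : v ≠ 0) : zr v ≠ 0 :=
  fun h => hv (funext fun j => by simpa [zr] using congrFun h j)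

theorem zr_dotProduct_zr {n : ℕ} (v w : Fin n → ℤ) : zr v ⬝ᵥ zr w = ((v ⬝ᵥ w : ℤ) : ℝ) := by
  simp [zr, dotProduct]

theorem exists_line_of_dotProduct_eq {v : Fin 2 → ℝ} (hv : v ≠ 0) (c : ℝ) :
    ∃ a b : Fin 2 → ℝ, b ≠ 0 ∧ ∀ x, v ⬝ᵥ x = c → ∃ t : ℝ, x = a + t • b := by
  have hn : v 0 ^ 2 + v 1 ^ 2 ≠ 0 := by
    intro h
    exact hv (funext fun j => by
      fin_cases j <;> simp <;> nlinarith [sq_nonneg (v 0), sq_nonneg (v 1)])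
  refine ⟨(c / (v 0 ^ 2 + v 1 ^ 2)) • v, ![-v 1, v 0], ?_, fun x hx => ?_⟩
  · intro hb
    have h0 : v 1 = 0 := by simpa using congrFun hb 0
    have h1 : v 0 = 0 := by simpa using congrFun hb 1
    exact hn (by simp [h0, h1])
  · refine ⟨(v 0 * x 1 - v 1 * x 0) / (v 0 ^ 2 + v 1 ^ 2), funext fun j => ?_⟩
    simp only [dotProduct, Fin.sum_univ_two] at hx
    fin_cases j <;> simp <;> field_simp
    · linear_combination v 0 * hx
    · linear_combination v 1 * hx

theorem exists_ne_zero_not_fibersCardLT {u : ℕ → Fin 2 → ℤ} {M : ℕ}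
    (hu : ∀ i j, |(u (i + 1) - u i) j| ≤ M) (k : ℕ) :
    ∃ v ≠ 0, ¬FibersCardLT k fun i => v ⬝ᵥ u i := by
  by_contra! hfib
  set P : (Fin 2 → ℤ) → Prop := fun v => ∀ᶠ i in atTop, 0 < v ⬝ᵥ u i
  have hP : ∀ v ≠ 0, P v ∨ P (-v) := fun v hv =>
    eventually_pos_or_eventually_pos_neg hu (hfib v hv)
  have hbound : ∀ {p q}, P p → P q → |p 0 * q 1 - p 1 * q 0| = 1 →
      ∀ j, p j * q j ≤ 0 → |q j| ≤ k * M := fun {p q} hp hq hdet j hj => by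
    have hp0 : p ≠ 0 := by rintro rfl; simpa [P] using hp.exists
    refine le_mul_of_sum_abs_smul_add_smul_le_one hu (hfib p hp0) hp hq (abs_nonneg (p j)) ?_
    rw [Fin.sum_univ_two, abs_add_abs_abs_smul_add_abs_smul hdet hj]
  obtain ⟨p, q, hp, hq, hdet, h0, h1, hsize⟩ := exists_unimodular_pair P hP (4 * (k * M) + 1)
  have hdet' : |q 0 * p 1 - q 1 * p 0| = 1 := by rw [← hdet, ← abs_neg]; ring_nf
  have := hbound hp hq hdet 0 h0
  have := hbound hp hq hdet 1 h1
  have := hbound hq hp hdet' 0 (by rwa [mul_comm])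
  have := hbound hq hp hdet' 1 (by rwa [mul_comm])
  push_cast at hsize
  linarith

theorem ramsey_bounded_gaps_collinear_general
    (M : ℕ) (u : ℕ → Fin 2 → ℤ)
    (h : ∀ i : ℕ, euclNorm (zr (u (i + 1)) - zr (u i)) ≤ (M : ℝ)) :
    ∀ k : ℕ, ∃ X : Finset ℕ, X.card = k ∧
      ∃ a b : Fin 2 → ℝ, b ≠ 0 ∧ ∀ i ∈ X, ∃ t : ℝ, zr (u i) = a + t • b := by
  intro k
  have hu : ∀ i j, |(u (i + 1) - u i) j| ≤ M := fun i j => by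
    have := (abs_le_euclNorm _ j).trans (h i)
    simp only [Pi.sub_apply, zr] at this
    exact_mod_cast this
  obtain ⟨v, hv, hfib⟩ := exists_ne_zero_not_fibersCardLT hu k
  simp only [FibersCardLT, not_forall, not_lt] at hfib
  obtain ⟨F, c, hFc, hkF⟩ := hfib
  obtain ⟨X, hXF, hXk⟩ := Finset.exists_subset_card_eq hkF
  obtain ⟨a, b, hb, hline⟩ := exists_line_of_dotProduct_eq (zr_ne_zero hv) c
  refine ⟨X, hXk, a, b, hb, fun i hi => hline _ ?_⟩
  rw [zr_dotProduct_zr, hFc i (hXF hi)]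

theorem ramsey_bounded_gaps_collinear
    (M : ℕ) (hM : 0 < M) (u : ℕ → Fin 2 → ℤ)
    (h : ∀ i : ℕ, euclNorm (zr (u (i + 1)) - zr (u i)) ≤ (M : ℝ)) :
    ∀ k : ℕ, ∃ X : Finset ℕ, X.card = k ∧
      ∃ a b : Fin 2 → ℝ, b ≠ 0 ∧ ∀ i ∈ X, ∃ t : ℝ, zr (u i) = a + t • b :=
  ramsey_bounded_gaps_collinear_general M u h
end

section
/- Let d ≥ 2 and M ∈ N, and suppose u₁, u₂, … ∈ Z^d satisfies ‖u_{i+1} − u_i‖₂ ≤ M for all i ∈ N. Then for each k ∈ N there exist an index set X ⊆ N with |X| = k and a (d−1)-dimensional affine hyperplane H of R^d such that {u_i : i ∈ X} ⊆ H. -/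
open Set

set_option maxHeartbeats 1000000

/-- If every fiber of `g` is finite, then `|g|` escapes to infinity. -/
lemma escape_aux (g : ℕ → ℤ) (hfin : ∀ c : ℤ, {i : ℕ | g i = c}.Finite) :
    ∀ B : ℤ, ∃ N : ℕ, ∀ i ≥ N, B < |g i| := by
  intro B
  have hsub : {i : ℕ | |g i| ≤ B} ⊆ ⋃ c ∈ Set.Icc (-B) B, {i : ℕ | g i = c} := by
    intro i hi
    simp only [Set.mem_iUnion, Set.mem_setOf_eq]
    exact ⟨g i, by simpa [abs_le] using hi, rfl⟩
  have hfinB : {i : ℕ | |g i| ≤ B}.Finite :=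
    Set.Finite.subset (Set.Finite.biUnion (Set.finite_Icc _ _) (fun c _ => hfin c)) hsub
  obtain ⟨b, hb⟩ := hfinB.bddAbove
  refine ⟨b + 1, fun i hi => ?_⟩
  by_contra hc
  push_neg at hc
  have := hb (show i ∈ {i : ℕ | |g i| ≤ B} from hc)
  omega

/-- If `g` has bounded steps and finite fibers and is once large positive beyond the
point where `|g| > L`, then `g → +∞`. -/
lemma side_pos (g : ℕ → ℤ) (L : ℤ) (hL : 0 ≤ L)
    (hstep : ∀ i, |g (i + 1) - g i| ≤ L)
    (hfin : ∀ c : ℤ, {i : ℕ | g i = c}.Finite)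
    (N₀ : ℕ) (hN₀ : ∀ i ≥ N₀, L < |g i|) (hp : L < g N₀) :
    ∀ B : ℤ, ∃ N : ℕ, ∀ i ≥ N, B < g i := by
  have pos : ∀ j : ℕ, L < g (N₀ + j) := by
    intro j
    induction j with
    | zero => simpa using hp
    | succ j ih =>
      have h1 := hstep (N₀ + j)
      have h2 := hN₀ (N₀ + j + 1) (by omega)
      have h1' := abs_le.1 h1
      rcases abs_cases (g (N₀ + j + 1)) with ⟨he, _⟩ | ⟨he, _⟩ <;>
        · show L < g (N₀ + j + 1); omega
  intro B
  obtain ⟨N₁, hN₁⟩ := escape_aux g hfin (max B L)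
  refine ⟨max N₁ N₀, fun i hi => ?_⟩
  have h1 := hN₁ i (le_trans (le_max_left _ _) hi)
  have h2 : L < g i := by
    have h3 := pos (i - N₀)
    rwa [Nat.add_sub_cancel' (le_trans (le_max_right _ _) hi)] at h3
  rcases abs_cases (g i) with ⟨he, _⟩ | ⟨he, _⟩ <;> omega

/-- Step bound is preserved under negation. -/
lemma neg_step (g : ℕ → ℤ) (L : ℤ) (h : ∀ i, |g (i + 1) - g i| ≤ L) :
    ∀ i, |(fun i => -(g i)) (i + 1) - (fun i => -(g i)) i| ≤ L := by
  intro i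
  simp only []
  rw [show -g (i + 1) - -g i = -(g (i + 1) - g i) from by ring, abs_neg]
  exact h i

/-- A bounded-step integer sequence with finite fibers tends to `+∞` or to `-∞`. -/
lemma signDefinite (g : ℕ → ℤ) (L : ℤ) (hL : 0 ≤ L)
    (hstep : ∀ i, |g (i + 1) - g i| ≤ L)
    (hfin : ∀ c : ℤ, {i : ℕ | g i = c}.Finite) :
    (∀ B : ℤ, ∃ N : ℕ, ∀ i ≥ N, B < g i) ∨ (∀ B : ℤ, ∃ N : ℕ, ∀ i ≥ N, g i < -B) := by
  obtain ⟨N₀, hN₀⟩ := escape_aux g hfin L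
  have hN₀' := hN₀ N₀ le_rfl
  rcases abs_cases (g N₀) with ⟨he, _⟩ | ⟨he, _⟩
  · left
    exact side_pos g L hL hstep hfin N₀ hN₀ (by omega)
  · right
    have hstep' := neg_step g L hstep
    have hfin' : ∀ c : ℤ, {i : ℕ | (fun i => -g i) i = c}.Finite := by
      intro c
      have : {i : ℕ | (fun i => -g i) i = c} = {i : ℕ | g i = -c} := by
        ext i; simp [neg_eq_iff_eq_neg]
      rw [this]; exact hfin (-c)
    have hN₀'' : ∀ i ≥ N₀, L < |(fun i => -g i) i| := by
      intro i hi; simpa [abs_neg] using hN₀ i hi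
    have := side_pos (fun i => -g i) L hL hstep' hfin' N₀ hN₀'' (by simpa using by omega)
    intro B
    obtain ⟨N, hN⟩ := this B
    exact ⟨N, fun i hi => by have := hN i hi; omega⟩

/-- Growth bound for a bounded-step sequence. -/
lemma growth (x : ℕ → ℤ) (M : ℤ) (hstep : ∀ i, |x (i + 1) - x i| ≤ M) :
    ∀ i : ℕ, |x i| ≤ |x 0| + M * i := by
  intro i
  induction i with
  | zero => simp
  | succ i ih =>
    have h1 := hstep i
    have h2 : |x (i + 1)| ≤ |x i| + M := by
      have := abs_add_le (x i) (x (i + 1) - x i)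
      simp only [add_sub_cancel] at this
      have h1' := abs_le.1 h1
      rcases abs_cases (x (i + 1) - x i) with ⟨he, _⟩ | ⟨he, _⟩ <;> omega
    have h3 : (M : ℤ) * ((i : ℤ) + 1) = M * i + M := by ring
    have h4 : ((i + 1 : ℕ) : ℤ) = (i : ℤ) + 1 := by push_cast; ring
    rw [h4, h3]
    omega

/-- Width lower bound from fiber counting. -/
lemma widthLB (g : ℕ → ℤ) (m n : ℕ) (hm : 1 ≤ m)
    (hcount : ∀ c : ℤ, ((Finset.range (n + 1)).filter (fun i => g i = c)).card ≤ m) :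
    ∃ i j : ℕ, i ≤ n ∧ j ≤ n ∧ (n + 1 : ℤ) ≤ (m : ℤ) * (g i - g j + 1) := by
  classical
  set F := Finset.range (n + 1) with hF
  have hFne : F.Nonempty := ⟨0, by simp [hF]⟩
  set img := F.image g with himg
  have hine : img.Nonempty := hFne.image g
  obtain ⟨i, hiF, hig⟩ := Finset.mem_image.1 (img.max'_mem hine)
  obtain ⟨j, hjF, hjg⟩ := Finset.mem_image.1 (img.min'_mem hine)
  have h1 : F.card ≤ m * img.card :=
    Finset.card_le_mul_card_image F m (fun a _ => hcount a)
  have h2 : img ⊆ Finset.Icc (img.min' hine) (img.max' hine) := fun c hc =>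
    Finset.mem_Icc.2 ⟨Finset.min'_le _ _ hc, Finset.le_max' _ _ hc⟩
  have h3 : img.card ≤ (img.max' hine + 1 - img.min' hine).toNat := by
    have := Finset.card_le_card h2
    rwa [Int.card_Icc] at this
  have h5 : img.min' hine ≤ img.max' hine :=
    Finset.min'_le _ _ (img.max'_mem hine)
  have hcardF : F.card = n + 1 := by simp [hF]
  have h6 : (n + 1 : ℕ) ≤ m * (img.max' hine + 1 - img.min' hine).toNat := by
    rw [← hcardF]
    exact le_trans h1 (Nat.mul_le_mul_left m h3)
  have h7 : ((n : ℤ) + 1) ≤ (m : ℤ) * (img.max' hine + 1 - img.min' hine) := by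
    have := (Int.ofNat_le.2 h6)
    push_cast at this
    rwa [Int.toNat_of_nonneg (by omega)] at this
  refine ⟨i, j, by simpa [hF, Nat.lt_succ_iff] using hiF,
    by simpa [hF, Nat.lt_succ_iff] using hjF, ?_⟩
  have : img.max' hine + 1 - img.min' hine = g i - g j + 1 := by rw [hig, hjg]; ring
  rwa [this] at h7

/-- Arithmetic helper. -/
lemma arith1 (P Q X Y X0 Y0 M N : ℝ) (a1 : 0 ≤ P) (a2 : 0 ≤ Q) (hMN : 0 ≤ M * N)
    (hX0 : 0 ≤ X0) (hY0 : 0 ≤ Y0) (hx : X ≤ X0 + M * N) (hy : Y ≤ Y0 + M * N) :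
    Q * Y + P * X ≤ (P + Q) * (X0 + Y0 + 2 * M * N) := by
  nlinarith [mul_le_mul_of_nonneg_left hy a2, mul_le_mul_of_nonneg_left hx a1,
    mul_nonneg a1 hY0, mul_nonneg a2 hX0, mul_nonneg a1 hMN, mul_nonneg a2 hMN]

/-- The heart of the argument: an integer walk in the plane with bounded steps such
that every linear fiber has fewer than `k` indices, both coordinates tending to `+∞`,
and bounded slope set, yields a contradiction. -/
lemma core2 (k M : ℕ) (hk : 2 ≤ k) (hM : 0 < M) (x y : ℕ → ℤ)
    (hxs : ∀ i, |x (i + 1) - x i| ≤ (M : ℤ)) (hys : ∀ i, |y (i + 1) - y i| ≤ (M : ℤ))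
    (hfib : ∀ a b c : ℤ, (a ≠ 0 ∨ b ≠ 0) → ∀ X : Finset ℕ,
      (∀ i ∈ X, a * x i + b * y i = c) → X.card < k)
    (hx : ∀ B : ℤ, ∃ N : ℕ, ∀ i ≥ N, B < x i)
    (hy : ∀ B : ℤ, ∃ N : ℕ, ∀ i ≥ N, B < y i)
    (hS : BddAbove {r : ℝ | ∃ N : ℕ, ∀ i ≥ N, r * (x i : ℝ) < (y i : ℝ)}) : False := by
  classical
  set S : Set ℝ := {r : ℝ | ∃ N : ℕ, ∀ i ≥ N, r * (x i : ℝ) < (y i : ℝ)} with hSdef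
  have h0S : (0 : ℝ) ∈ S := by
    obtain ⟨N, hN⟩ := hy 0
    exact ⟨N, fun i hi => by
      have := hN i hi
      rw [zero_mul]
      exact_mod_cast this⟩
  set α := sSup S with hα
  have hα0 : 0 ≤ α := le_csSup hS h0S
  have hfin : ∀ a b c : ℤ, (a ≠ 0 ∨ b ≠ 0) → {i : ℕ | a * x i + b * y i = c}.Finite := by
    intro a b c hab
    by_contra hinf
    obtain ⟨X, hXs, hXc⟩ := Set.Infinite.exists_subset_card_eq hinf k
    have := hfib a b c hab X (fun i hi => hXs hi)
    omega
  have hxpos : ∃ N : ℕ, ∀ i ≥ N, 0 < x i := hx 0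
  -- lower approach to the sup
  have ha : ∀ r : ℝ, r < α → ∃ N : ℕ, ∀ i ≥ N, r * (x i : ℝ) < (y i : ℝ) := by
    intro r hr
    obtain ⟨s, hsS, hrs⟩ := exists_lt_of_lt_csSup ⟨0, h0S⟩ hr
    obtain ⟨N₁, h₁⟩ := hsS
    obtain ⟨N₂, h₂⟩ := hxpos
    refine ⟨max N₁ N₂, fun i hi => ?_⟩
    have hx' : (0 : ℝ) < (x i : ℝ) := by
      exact_mod_cast h₂ i (le_trans (le_max_right _ _) hi)
    have := h₁ i (le_trans (le_max_left _ _) hi)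
    nlinarith
  -- upper approach
  have hb : ∀ r : ℝ, α < r → ∃ N : ℕ, ∀ i ≥ N, (y i : ℝ) < r * (x i : ℝ) := by
    intro r hr
    obtain ⟨q, hq1, hq2⟩ := exists_rat_btwn hr
    set p : ℤ := q.num with hp
    set dn : ℤ := (q.den : ℤ) with hdn'
    have hdn : 0 < dn := by rw [hdn']; exact_mod_cast q.pos
    have hdnR : (0 : ℝ) < (dn : ℝ) := by exact_mod_cast hdn
    have hqcast : (q : ℝ) = (p : ℝ) / (dn : ℝ) := by
      rw [hp, hdn']; push_cast [Rat.cast_def]; ring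
    set g : ℕ → ℤ := fun i => dn * y i - p * x i with hg
    have hgstep : ∀ i, |g (i + 1) - g i| ≤ (|dn| + |p|) * M := by
      intro i
      have h1 := hys i
      have h2 := hxs i
      have he : g (i + 1) - g i = dn * (y (i + 1) - y i) - p * (x (i + 1) - x i) := by
        simp only [hg]; ring
      rw [he]
      have h3 := abs_add_le (dn * (y (i + 1) - y i)) (-(p * (x (i + 1) - x i)))
      rw [← sub_eq_add_neg, abs_neg] at h3
      rw [abs_mul, abs_mul] at h3
      have h4 : |dn| * |y (i + 1) - y i| ≤ |dn| * M :=
        mul_le_mul_of_nonneg_left h1 (abs_nonneg _)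
      have h5 : |p| * |x (i + 1) - x i| ≤ |p| * M :=
        mul_le_mul_of_nonneg_left h2 (abs_nonneg _)
      calc |dn * (y (i + 1) - y i) - p * (x (i + 1) - x i)|
          ≤ |dn| * |y (i + 1) - y i| + |p| * |x (i + 1) - x i| := h3
        _ ≤ |dn| * M + |p| * M := add_le_add h4 h5
        _ = (|dn| + |p|) * M := by ring
    have hgfin : ∀ c : ℤ, {i : ℕ | g i = c}.Finite := by
      intro c
      have h1 := hfin (-p) dn c (Or.inr (ne_of_gt hdn))
      have hset : {i : ℕ | (-p) * x i + dn * y i = c} = {i : ℕ | g i = c} := by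
        ext i; simp only [Set.mem_setOf_eq, hg]; constructor <;> intro h' <;> linarith
      rwa [hset] at h1
    have hLnn : (0 : ℤ) ≤ (|dn| + |p|) * M := by positivity
    rcases signDefinite g _ hLnn hgstep hgfin with hpos | hneg
    · exfalso
      obtain ⟨N, hN⟩ := hpos 0
      have hmem : (q : ℝ) ∈ S := by
        refine ⟨N, fun i hi => ?_⟩
        have h1 : (0 : ℤ) < dn * y i - p * x i := hN i hi
        have h1R : ((0 : ℤ) : ℝ) < ((dn * y i - p * x i : ℤ) : ℝ) := by exact_mod_cast h1
        have h1' : (p : ℝ) * (x i : ℝ) < (dn : ℝ) * (y i : ℝ) := by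
          push_cast at h1R; linarith
        rw [hqcast, div_mul_eq_mul_div, div_lt_iff₀ hdnR]
        linarith
      have := le_csSup hS hmem
      linarith
    · obtain ⟨N, hN⟩ := hneg 0
      obtain ⟨N₂, h₂⟩ := hxpos
      refine ⟨max N N₂, fun i hi => ?_⟩
      have hgi : g i < 0 := by simpa using hN i (le_trans (le_max_left _ _) hi)
      have hx' : (0 : ℝ) < (x i : ℝ) := by
        exact_mod_cast h₂ i (le_trans (le_max_right _ _) hi)
      have h1' : (dn : ℝ) * (y i : ℝ) < (p : ℝ) * (x i : ℝ) := by
        have h1R : ((dn * y i - p * x i : ℤ) : ℝ) < ((0 : ℤ) : ℝ) := by exact_mod_cast hgi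
        push_cast at h1R; linarith
      have h2' : (y i : ℝ) < (q : ℝ) * (x i : ℝ) := by
        rw [hqcast, div_mul_eq_mul_div, lt_div_iff₀ hdnR]
        linarith
      have h3' : (q : ℝ) * (x i : ℝ) < r * (x i : ℝ) :=
        mul_lt_mul_of_pos_right hq2 hx'
      linarith
  -- Dirichlet approximation
  have hMR : (0 : ℝ) < (M : ℝ) := by exact_mod_cast hM
  have hkR : (2 : ℝ) ≤ (k : ℝ) := by exact_mod_cast hk
  obtain ⟨δ, hδ⟩ : ∃ δ : ℝ, δ = 1 / (16 * M * k) := ⟨_, rfl⟩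
  have hδpos : 0 < δ := by
    rw [hδ]
    have hk0 : (0:ℝ) < (k:ℝ) := by linarith
    positivity
  obtain ⟨p, q, hq0, hqn, hdir⟩ := Real.exists_int_int_abs_mul_sub_le α
    (show 0 < ⌈1 / δ⌉₊ + 1 by omega)
  have hdir' : |(q : ℝ) * α - (p : ℝ)| ≤ δ := by
    refine le_trans hdir ?_
    have h1 : (1 / δ : ℝ) ≤ ((⌈1 / δ⌉₊ + 1 : ℕ) : ℝ) := by
      push_cast
      calc (1 / δ : ℝ) ≤ ⌈1 / δ⌉₊ := Nat.le_ceil _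
        _ ≤ (⌈1 / δ⌉₊ : ℝ) + 1 := by linarith
    have h2 : (1 / δ : ℝ) ≤ ((⌈1 / δ⌉₊ + 1 : ℕ) : ℝ) + 1 := by linarith
    calc (1 : ℝ) / (((⌈1 / δ⌉₊ + 1 : ℕ) : ℝ) + 1) ≤ 1 / (1 / δ) :=
        one_div_le_one_div_of_le (by positivity) h2
      _ = δ := one_div_one_div δ
  have hqR : (0 : ℝ) < (q : ℝ) := by exact_mod_cast hq0
  obtain ⟨ε, hε⟩ : ∃ ε : ℝ, ε = δ / (q : ℝ) := ⟨_, rfl⟩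
  have hεpos : 0 < ε := by rw [hε]; positivity
  obtain ⟨N₁, hN₁⟩ := ha (α - ε) (by linarith)
  obtain ⟨N₂, hN₂⟩ := hb (α + ε) (by linarith)
  obtain ⟨N₃, hN₃⟩ := hxpos
  obtain ⟨N, hN⟩ : ∃ N : ℕ, N = max (max N₁ N₂) N₃ := ⟨_, rfl⟩
  have hNN₁ : N₁ ≤ N := hN ▸ le_trans (le_max_left _ _) (le_max_left _ _)
  have hNN₂ : N₂ ≤ N := hN ▸ le_trans (le_max_right _ _) (le_max_left _ _)
  have hNN₃ : N₃ ≤ N := hN ▸ le_max_right _ _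
  -- pointwise bound for large indices
  have hbound : ∀ i ≥ N, |(q : ℝ) * (y i : ℝ) - (p : ℝ) * (x i : ℝ)| ≤ 2 * δ * (x i : ℝ) := by
    intro i hi
    have h1 := hN₁ i (le_trans hNN₁ hi)
    have h2 := hN₂ i (le_trans hNN₂ hi)
    have h3 : (0 : ℝ) < (x i : ℝ) := by exact_mod_cast hN₃ i (le_trans hNN₃ hi)
    have h4 : |(y i : ℝ) - α * (x i : ℝ)| ≤ ε * (x i : ℝ) :=
      abs_le.2 ⟨by nlinarith, by nlinarith⟩
    have hqe : (q : ℝ) * ε = δ := by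
      rw [hε]; field_simp
    have he : (q : ℝ) * (y i : ℝ) - (p : ℝ) * (x i : ℝ)
        = (q : ℝ) * ((y i : ℝ) - α * (x i : ℝ)) + ((q : ℝ) * α - (p : ℝ)) * (x i : ℝ) := by
      ring
    rw [he]
    calc |(q : ℝ) * ((y i : ℝ) - α * (x i : ℝ)) + ((q : ℝ) * α - (p : ℝ)) * (x i : ℝ)|
        ≤ |(q : ℝ) * ((y i : ℝ) - α * (x i : ℝ))| + |((q : ℝ) * α - (p : ℝ)) * (x i : ℝ)| :=
          abs_add_le _ _
      _ = (q : ℝ) * |(y i : ℝ) - α * (x i : ℝ)| + |(q : ℝ) * α - (p : ℝ)| * (x i : ℝ) := by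
          rw [abs_mul, abs_mul, abs_of_pos hqR, abs_of_pos h3]
      _ ≤ (q : ℝ) * (ε * (x i : ℝ)) + δ * (x i : ℝ) :=
          add_le_add (mul_le_mul_of_nonneg_left h4 hqR.le)
            (mul_le_mul_of_nonneg_right hdir' h3.le)
      _ = 2 * δ * (x i : ℝ) := by
          rw [show (q : ℝ) * (ε * (x i : ℝ)) = ((q : ℝ) * ε) * (x i : ℝ) from by ring, hqe]
          ring
  -- growth bounds in real form
  have hgxR : ∀ i : ℕ, |(x i : ℝ)| ≤ |(x 0 : ℝ)| + M * i := by
    intro i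
    have h' : ((|x i| : ℤ) : ℝ) ≤ ((|x 0| + M * i : ℤ) : ℝ) := by
      exact_mod_cast growth x M hxs i
    push_cast at h'
    linarith
  have hgyR : ∀ i : ℕ, |(y i : ℝ)| ≤ |(y 0 : ℝ)| + M * i := by
    intro i
    have h' : ((|y i| : ℤ) : ℝ) ≤ ((|y 0| + M * i : ℤ) : ℝ) := by
      exact_mod_cast growth y M hys i
    push_cast at h'
    linarith
  -- constants
  obtain ⟨K₀, hK₀⟩ : ∃ K₀ : ℝ,
      K₀ = (|(p : ℝ)| + |(q : ℝ)|) * (|(x 0 : ℝ)| + |(y 0 : ℝ)| + 2 * M * N) := ⟨_, rfl⟩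
  have hK₀nn : 0 ≤ K₀ := by rw [hK₀]; positivity
  obtain ⟨C, hC⟩ : ∃ C : ℝ, C = (k : ℝ) * (2 * K₀ + 4 * δ * |(x 0 : ℝ)| + 1) := ⟨_, rfl⟩
  have hCpos : 2 ≤ C := by
    have h1 : (1 : ℝ) ≤ 2 * K₀ + 4 * δ * |(x 0 : ℝ)| + 1 := by
      have h2 : (0:ℝ) ≤ 4 * δ * |(x 0 : ℝ)| := by positivity
      linarith
    have h3 := mul_le_mul hkR h1 zero_le_one (by positivity : (0:ℝ) ≤ (k:ℝ))
    rw [hC]; linarith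
  obtain ⟨n, hn⟩ := exists_nat_gt (max (N : ℝ) (2 * C))
  have hnN : (N : ℝ) < n := lt_of_le_of_lt (le_max_left _ _) hn
  have hnN' : N ≤ n := by exact_mod_cast hnN.le
  have hnC : 2 * C < n := lt_of_le_of_lt (le_max_right _ _) hn
  obtain ⟨B, hB⟩ : ∃ B : ℝ, B = K₀ + 2 * δ * (|(x 0 : ℝ)| + M * n) := ⟨_, rfl⟩
  -- global bound for indices up to n
  have hGB : ∀ i ≤ n, |(q : ℝ) * (y i : ℝ) - (p : ℝ) * (x i : ℝ)| ≤ B := by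
    intro i hin
    have hMi : (M : ℝ) * (i : ℝ) ≤ (M : ℝ) * (n : ℝ) := by
      apply mul_le_mul_of_nonneg_left _ (by positivity)
      exact_mod_cast hin
    by_cases hiN : N ≤ i
    · have h1 := hbound i hiN
      have h2 : (x i : ℝ) ≤ |(x 0 : ℝ)| + M * n := by
        have h3 := hgxR i
        have h4 : (x i : ℝ) ≤ |(x i : ℝ)| := le_abs_self _
        linarith
      have h7 : 2 * δ * (x i : ℝ) ≤ 2 * δ * (|(x 0 : ℝ)| + M * n) :=
        mul_le_mul_of_nonneg_left h2 (by positivity)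
      rw [hB]; linarith
    · push_neg at hiN
      have hMiN : (M : ℝ) * (i : ℝ) ≤ (M : ℝ) * (N : ℝ) := by
        apply mul_le_mul_of_nonneg_left _ (by positivity)
        exact_mod_cast hiN.le
      have hxi : |(x i : ℝ)| ≤ |(x 0 : ℝ)| + M * N := by
        have := hgxR i; linarith
      have hyi : |(y i : ℝ)| ≤ |(y 0 : ℝ)| + M * N := by
        have := hgyR i; linarith
      have h8 : |(q : ℝ) * (y i : ℝ) - (p : ℝ) * (x i : ℝ)|
          ≤ |(q : ℝ)| * |(y i : ℝ)| + |(p : ℝ)| * |(x i : ℝ)| := by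
        have h3 := abs_add_le ((q : ℝ) * (y i : ℝ)) (-((p : ℝ) * (x i : ℝ)))
        rw [← sub_eq_add_neg, abs_neg, abs_mul, abs_mul] at h3
        exact h3
      have a1 : (0:ℝ) ≤ |(p : ℝ)| := abs_nonneg _
      have a2 : (0:ℝ) ≤ |(q : ℝ)| := abs_nonneg _
      have a7 : (0:ℝ) ≤ (M:ℝ) * (N:ℝ) := by positivity
      have h9 : |(q : ℝ)| * |(y i : ℝ)| + |(p : ℝ)| * |(x i : ℝ)| ≤ K₀ := by
        rw [hK₀]
        exact arith1 _ _ _ _ _ _ _ _ a1 a2 a7 (abs_nonneg _) (abs_nonneg _) hxi hyi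
      have hBge : K₀ ≤ B := by
        rw [hB]
        have h5 : (0:ℝ) ≤ 2 * δ * (|(x 0 : ℝ)| + M * n) := by positivity
        linarith
      linarith
  -- fiber counting for the chosen functional
  have hcount : ∀ c : ℤ,
      ((Finset.range (n + 1)).filter (fun i => q * y i - p * x i = c)).card ≤ k - 1 := by
    intro c
    have h1 := hfib (-p) q c (Or.inr (ne_of_gt hq0))
      ((Finset.range (n + 1)).filter (fun i => q * y i - p * x i = c))
      (fun i hi => by
        have := (Finset.mem_filter.1 hi).2
        linarith)
    omega
  obtain ⟨i, j, hi, hj, hw⟩ := widthLB (fun i => q * y i - p * x i) (k - 1) n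
    (by omega) hcount
  have hwR : (n : ℝ) + 1 ≤ ((k : ℝ) - 1) *
      (((q * y i - p * x i : ℤ) : ℝ) - ((q * y j - p * x j : ℤ) : ℝ) + 1) := by
    have hk1 : ((k - 1 : ℕ) : ℤ) = (k : ℤ) - 1 := by omega
    rw [hk1] at hw
    exact_mod_cast hw
  have hgi := hGB i hi
  have hgj := hGB j hj
  have hgi' : ((q * y i - p * x i : ℤ) : ℝ) ≤ B := by
    have h' := (abs_le.1 hgi).2
    push_cast
    linarith
  have hgj' : -B ≤ ((q * y j - p * x j : ℤ) : ℝ) := by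
    have h' := (abs_le.1 hgj).1
    push_cast
    linarith
  -- derive the contradiction
  have hd1 : ((q * y i - p * x i : ℤ) : ℝ) - ((q * y j - p * x j : ℤ) : ℝ) + 1
      ≤ 2 * B + 1 := by linarith
  have h0k : (0:ℝ) ≤ (k:ℝ) - 1 := by linarith
  have hpos2 : (0 : ℝ) < ((q * y i - p * x i : ℤ) : ℝ) - ((q * y j - p * x j : ℤ) : ℝ) + 1 := by
    nlinarith
  have h2B : (0:ℝ) ≤ 2 * B + 1 := by linarith
  have t1 := mul_le_mul_of_nonneg_left hd1 h0k
  have t2 := mul_le_mul_of_nonneg_right (show (k:ℝ) - 1 ≤ (k:ℝ) from by linarith) h2B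
  have hkey : (n : ℝ) + 1 ≤ (k : ℝ) * (2 * B + 1) := by linarith
  have hM0 : (M:ℝ) ≠ 0 := ne_of_gt hMR
  have hk0 : (k:ℝ) ≠ 0 := by intro h'; rw [h'] at hkR; linarith
  have hquart : (k : ℝ) * (4 * δ * (M : ℝ)) = 1 / 4 := by
    rw [hδ]; field_simp; ring
  have hexp : (k : ℝ) * (2 * B + 1) = C + (k : ℝ) * (4 * δ * (M : ℝ)) * n := by
    rw [hB, hC]; ring
  rw [hexp, hquart] at hkey
  linarith

/-- Intermediate: same as `core2` but without the boundedness hypothesis. -/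
lemma core (k M : ℕ) (hk : 2 ≤ k) (hM : 0 < M) (x y : ℕ → ℤ)
    (hxs : ∀ i, |x (i + 1) - x i| ≤ (M : ℤ)) (hys : ∀ i, |y (i + 1) - y i| ≤ (M : ℤ))
    (hfib : ∀ a b c : ℤ, (a ≠ 0 ∨ b ≠ 0) → ∀ X : Finset ℕ,
      (∀ i ∈ X, a * x i + b * y i = c) → X.card < k)
    (hx : ∀ B : ℤ, ∃ N : ℕ, ∀ i ≥ N, B < x i)
    (hy : ∀ B : ℤ, ∃ N : ℕ, ∀ i ≥ N, B < y i) : False := by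
  rcases Classical.em (BddAbove {r : ℝ | ∃ N : ℕ, ∀ i ≥ N, r * (x i : ℝ) < (y i : ℝ)}) with h1 | h1
  · exact core2 k M hk hM x y hxs hys hfib hx hy h1
  rcases Classical.em (BddAbove {r : ℝ | ∃ N : ℕ, ∀ i ≥ N, r * (y i : ℝ) < (x i : ℝ)}) with h2 | h2
  · exact core2 k M hk hM y x hys hxs
      (fun a b c hab X hX => hfib b a c hab.symm X (fun i hi => by linarith [hX i hi]))
      hy hx h2
  · obtain ⟨s, hsS, hs1⟩ := not_bddAbove_iff.1 h1 1
    obtain ⟨t, htS, ht1⟩ := not_bddAbove_iff.1 h2 1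
    obtain ⟨N₁, hN₁⟩ := hsS
    obtain ⟨N₂, hN₂⟩ := htS
    obtain ⟨N₃, hN₃⟩ := hx 0
    set i := max (max N₁ N₂) N₃ with hi
    have e1 := hN₁ i (le_trans (le_max_left _ _) (le_max_left _ _))
    have e2 := hN₂ i (le_trans (le_max_right _ _) (le_max_left _ _))
    have e3 : (0 : ℝ) < (x i : ℝ) := by
      exact_mod_cast hN₃ i (le_max_right _ _)
    have ht0 : (0 : ℝ) < t := lt_trans one_pos ht1
    have h5 : t * (s * (x i : ℝ)) < t * (y i : ℝ) := by nlinarith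
    have h6 : t * (s * (x i : ℝ)) < (x i : ℝ) := lt_trans h5 e2
    nlinarith [mul_pos (sub_pos.2 hs1) (sub_pos.2 ht1)]

theorem bounded_gaps_points_in_hyperplane
    (d : ℕ) (hd : 2 ≤ d) (M : ℕ) (hM : 0 < M) (u : ℕ → Fin d → ℤ)
    (h : ∀ i : ℕ, euclNorm (zr (u (i + 1)) - zr (u i)) ≤ (M : ℝ)) :
    ∀ k : ℕ, ∃ X : Finset ℕ, X.card = k ∧
      ∃ v : Fin d → ℝ, v ≠ 0 ∧ ∃ c : ℝ, ∀ i ∈ X, ∑ j, (u i j : ℝ) * v j = c := by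
  classical
  intro k
  set j₀ : Fin d := ⟨0, by omega⟩ with hj₀
  set j₁ : Fin d := ⟨1, by omega⟩ with hj₁
  have hne : j₀ ≠ j₁ := by
    simp only [hj₀, hj₁, ne_eq, Fin.mk.injEq]
    omega
  -- small k
  rcases Nat.lt_or_ge k 2 with hk2 | hk2
  · set v : Fin d → ℝ := fun j => if j = j₀ then (1 : ℝ) else 0 with hv
    have hvne : v ≠ 0 := by
      intro hcon
      have := congrFun hcon j₀
      simp [hv] at this
    interval_cases k
    · exact ⟨∅, by simp, v, hvne, 0, by simp⟩
    · refine ⟨{0}, by simp, v, hvne, (u 0 j₀ : ℝ), ?_⟩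
      intro i hi
      rw [Finset.mem_singleton] at hi
      subst hi
      simp [hv, mul_ite, mul_one, mul_zero, Finset.sum_ite_eq']
  -- main case
  by_contra hcon
  push_neg at hcon
  set x : ℕ → ℤ := fun i => u i j₀ with hx
  set y : ℕ → ℤ := fun i => u i j₁ with hy
  -- step bounds
  have hstep : ∀ (j : Fin d) i, |u (i + 1) j - u i j| ≤ (M : ℤ) := by
    intro j i
    have hh := h i
    unfold euclNorm zr at hh
    have hsumnn : (0 : ℝ) ≤ ∑ l, (((u (i + 1) l : ℝ) - (u i l : ℝ))) ^ 2 := by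
      apply Finset.sum_nonneg
      intro l _
      positivity
    have hsum : (∑ l, (((u (i + 1) l : ℝ) - (u i l : ℝ))) ^ 2) ≤ (M : ℝ) ^ 2 := by
      simp only [Pi.sub_apply] at hh
      have h1 : Real.sqrt (∑ l, (((u (i + 1) l : ℝ) - (u i l : ℝ))) ^ 2) ≤ (M : ℝ) := hh
      nlinarith [Real.sq_sqrt hsumnn, Real.sqrt_nonneg
        (∑ l, (((u (i + 1) l : ℝ) - (u i l : ℝ))) ^ 2)]
    have hterm : (((u (i + 1) j : ℝ) - (u i j : ℝ))) ^ 2 ≤ (M : ℝ) ^ 2 := by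
      exact le_trans (Finset.single_le_sum
        (f := fun l => (((u (i + 1) l : ℝ) - (u i l : ℝ))) ^ 2)
        (fun l _ => by positivity) (Finset.mem_univ j)) hsum
    have hMnn : (0 : ℝ) ≤ (M : ℝ) := by positivity
    have habs : |((u (i + 1) j : ℝ) - (u i j : ℝ))| ≤ (M : ℝ) := by
      nlinarith [sq_abs ((u (i + 1) j : ℝ) - (u i j : ℝ)),
        abs_nonneg ((u (i + 1) j : ℝ) - (u i j : ℝ))]
    have : |((u (i + 1) j - u i j : ℤ) : ℝ)| ≤ (M : ℝ) := by
      push_cast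
      convert habs using 2
    exact_mod_cast this
  have hxs : ∀ i, |x (i + 1) - x i| ≤ (M : ℤ) := fun i => hstep j₀ i
  have hys : ∀ i, |y (i + 1) - y i| ≤ (M : ℤ) := fun i => hstep j₁ i
  -- fiber bound
  have hfib : ∀ a b c : ℤ, (a ≠ 0 ∨ b ≠ 0) → ∀ X : Finset ℕ,
      (∀ i ∈ X, a * x i + b * y i = c) → X.card < k := by
    intro a b c hab X hX
    by_contra hcard
    push_neg at hcard
    obtain ⟨Y, hYX, hYc⟩ := Finset.exists_subset_card_eq hcard
    set v : Fin d → ℝ := fun j => (if j = j₀ then (a : ℝ) else 0) +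
      (if j = j₁ then (b : ℝ) else 0) with hv
    have hvne : v ≠ 0 := by
      intro hcon'
      rcases hab with ha | hb
      · have := congrFun hcon' j₀
        simp [hv, hne] at this
        exact ha (by exact_mod_cast this)
      · have := congrFun hcon' j₁
        simp [hv, hne.symm] at this
        exact hb (by exact_mod_cast this)
    obtain ⟨i, hiY, hneq⟩ := hcon Y hYc v hvne (c : ℝ)
    apply hneq
    have hXi := hX i (hYX hiY)
    have hsum : ∑ j, (u i j : ℝ) * v j = (u i j₀ : ℝ) * a + (u i j₁ : ℝ) * b := by
      rw [hv]
      have : ∀ j : Fin d, (u i j : ℝ) * ((if j = j₀ then (a : ℝ) else 0) +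
          (if j = j₁ then (b : ℝ) else 0)) =
          (if j = j₀ then (u i j : ℝ) * a else 0) +
          (if j = j₁ then (u i j : ℝ) * b else 0) := by
        intro j
        by_cases h1 : j = j₀
        · by_cases h2 : j = j₁
          · exact absurd (h1.symm.trans h2) hne
          · simp [h1, h2, hne]
        · by_cases h2 : j = j₁ <;> simp [h1, h2, Ne.symm hne]
      rw [Finset.sum_congr rfl (fun j _ => this j), Finset.sum_add_distrib,
        Finset.sum_ite_eq', Finset.sum_ite_eq']
      simp
    rw [hsum]
    have : a * x i + b * y i = c := hXi
    rw [hx, hy] at this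
    push_cast [← this]
    ring
  -- fibers of x and y are finite
  have hfinx : ∀ c : ℤ, {i : ℕ | x i = c}.Finite := by
    intro c
    by_contra hinf
    obtain ⟨X, hXs, hXc⟩ := Set.Infinite.exists_subset_card_eq hinf k
    have := hfib 1 0 c (Or.inl one_ne_zero) X (fun i hi => by
      have := hXs hi
      simp only [Set.mem_setOf_eq] at this
      linarith)
    omega
  have hfiny : ∀ c : ℤ, {i : ℕ | y i = c}.Finite := by
    intro c
    by_contra hinf
    obtain ⟨X, hXs, hXc⟩ := Set.Infinite.exists_subset_card_eq hinf k
    have := hfib 0 1 c (Or.inr one_ne_zero) X (fun i hi => by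
      have := hXs hi
      simp only [Set.mem_setOf_eq] at this
      linarith)
    omega
  have hM' : (0 : ℤ) ≤ (M : ℤ) := by positivity
  rcases signDefinite x (M : ℤ) hM' hxs hfinx with px | nx <;>
    rcases signDefinite y (M : ℤ) hM' hys hfiny with py | ny
  · exact core k M hk2 hM x y hxs hys hfib px py
  · refine core k M hk2 hM x (fun i => -(y i)) hxs
      (neg_step y (M : ℤ) hys)
      (fun a b c hab X hX => hfib a (-b) c
        (hab.imp id (fun h' => neg_ne_zero.2 h'))
        X (fun i hi => by
          have h' : a * x i + b * (-(y i)) = c := hX i hi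
          linear_combination h'))
      px (fun B => by
        obtain ⟨N, hN⟩ := ny B
        exact ⟨N, fun i hi => by
          have h' := hN i hi
          show B < -(y i)
          omega⟩)
  · refine core k M hk2 hM (fun i => -(x i)) y
      (neg_step x (M : ℤ) hxs) hys
      (fun a b c hab X hX => hfib (-a) b c
        (hab.imp (fun h' => neg_ne_zero.2 h') id)
        X (fun i hi => by
          have h' : a * (-(x i)) + b * y i = c := hX i hi
          linear_combination h'))
      (fun B => by
        obtain ⟨N, hN⟩ := nx B
        exact ⟨N, fun i hi => by
          have h' := hN i hi
          show B < -(x i)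
          omega⟩) py
  · refine core k M hk2 hM (fun i => -(x i)) (fun i => -(y i))
      (neg_step x (M : ℤ) hxs)
      (neg_step y (M : ℤ) hys)
      (fun a b c hab X hX => hfib (-a) (-b) c
        (hab.imp (fun h' => neg_ne_zero.2 h') (fun h' => neg_ne_zero.2 h'))
        X (fun i hi => by
          have h' : a * (-(x i)) + b * (-(y i)) = c := hX i hi
          linear_combination h'))
      (fun B => by
        obtain ⟨N, hN⟩ := nx B
        exact ⟨N, fun i hi => by
          have h' := hN i hi
          show B < -(x i)
          omega⟩)
      (fun B => by
        obtain ⟨N, hN⟩ := ny B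
        exact ⟨N, fun i hi => by
          have h' := hN i hi
          show B < -(y i)
          omega⟩)
end

section
/- Let d ∈ N, let T : [−1,1]^d → [−1,1]^{d+1} be a Lipschitz function with Lipschitz constant 1 such that at every point x ∈ (−1,1)^d where T is differentiable its derivative is nonzero, and let φ ∈ L^∞([−1,1]^d) be non-negative with ∫ φ dλ > 0 (λ denoting Lebesgue measure). Then there exist δ > 0, x ∈ [−1,1]^d and w ∈ S^d ⊂ R^{d+1} such that for every sufficiently small ε > 0 there exists y ∈ [−1,1]^d with the following three properties: (r-i) ‖(T(y) − T(x))/‖T(y) − T(x)‖₂ − w‖₂ < ε; (r-ii) for every t ∈ [0,1], ‖T((1−t)x + ty) − [(1−t)T(x) + tT(y)]‖₂ < ε‖y − x‖₂; (r-iii) letting K_R = {(1−t)x + ty : t ∈ [0,1]} + B(0, ε‖y − x‖₂) (the Minkowski sum with the closed Euclidean ball of radius ε‖y − x‖₂ centered at the origin in R^d), one has (1/λ(K_R)) ∫_{K_R} φ dλ > δ. -/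
/-!
By Rademacher's theorem `T` is differentiable almost everywhere, and by the Lebesgue density
theorem almost every point of a level set `S = {a ≤ φ}` of positive measure is a density point
of `S`. At a point `x` with both properties pick `v` with `DT(x) v ≠ 0`; for `y = x + s v` with
`s` small, the chord `T y - T x` points nearly in the direction `w` of `DT(x) v`, and `T` is
`ε ‖y - x‖`-close to affine on `[x, y]`. The tube of radius `ε ‖y - x‖` around `[x, y]` lies
between the balls of radii `ε ‖y - x‖` and `(1 + ε) ‖y - x‖` about `x`, and the first is a fixed
fraction of the second, so by density at least half of the tube lies in `S`; hence the average
of `φ` over the tube exceeds `a / 4`.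
-/

open Set MeasureTheory
open Filter Metric
open scoped ENNReal Topology

section Linearization

variable {E F : Type*} [NormedAddCommGroup E] [NormedSpace ℝ E]
  [NormedAddCommGroup F] [NormedSpace ℝ F] {f : E → F} {L : E →L[ℝ] F} {x : E}

theorem NormedSpace.continuousAt_normalize {u : F} (hu : u ≠ 0) :
    ContinuousAt NormedSpace.normalize u :=
  (continuous_norm.continuousAt.inv₀ (norm_ne_zero_iff.2 hu)).smul continuousAt_id

theorem HasFDerivAt.tendsto_normalize_sub (hf : HasFDerivAt f L x) {v : E} (hv : L v ≠ 0) :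
    Tendsto (fun s : ℝ => NormedSpace.normalize (f (x + s • v) - f x)) (𝓝[>] 0)
      (𝓝 (NormedSpace.normalize (L v))) := by
  have hline : HasDerivAt (fun s : ℝ => f (x + s • v)) (L v) 0 := by
    have := hf.comp_hasDerivAt_of_eq (0 : ℝ)
      (((hasDerivAt_id (0 : ℝ)).smul_const v).const_add x) (by simp)
    simpa only [id, one_smul, Function.comp_def] using this
  refine ((NormedSpace.continuousAt_normalize hv).tendsto.comp
    hline.tendsto_slope_zero_right).congr' ?_
  filter_upwards [self_mem_nhdsWithin] with s (hs : 0 < s)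
  simp [NormedSpace.normalize_smul_of_pos (inv_pos.2 hs)]

theorem HasFDerivAt.eventually_norm_sub_chord_le (hf : HasFDerivAt f L x) {η : ℝ} (hη : 0 < η) :
    ∀ᶠ y in 𝓝 x, ∀ t ∈ Icc (0 : ℝ) 1,
      ‖f ((1 - t) • x + t • y) - ((1 - t) • f x + t • f y)‖ ≤ η * ‖y - x‖ := by
  obtain ⟨ρ, hρ, hsmall⟩ := Metric.eventually_nhds_iff_ball.1 (hf.isLittleO.def (half_pos hη))
  filter_upwards [ball_mem_nhds x hρ] with y hy t ⟨ht0, ht1⟩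
  set z := (1 - t) • x + t • y
  have hz : z ∈ ball x ρ :=
    (convex_ball x ρ).segment_subset (mem_ball_self hρ) hy
      ⟨1 - t, t, by linarith, ht0, by ring, rfl⟩
  have hzx : z - x = t • (y - x) := by module
  have hsplit : f z - ((1 - t) • f x + t • f y)
      = (f z - f x - L (z - x)) - t • (f y - f x - L (y - x)) := by
    rw [hzx, map_smul]; module
  have hzx_norm : ‖z - x‖ = t * ‖y - x‖ := by
    rw [hzx, norm_smul, Real.norm_of_nonneg ht0]
  calc ‖f z - ((1 - t) • f x + t • f y)‖
      ≤ ‖f z - f x - L (z - x)‖ + t * ‖f y - f x - L (y - x)‖ := by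
        rw [hsplit]
        refine (norm_sub_le _ _).trans_eq ?_
        rw [norm_smul, Real.norm_of_nonneg ht0]
    _ ≤ η / 2 * ‖z - x‖ + t * (η / 2 * ‖y - x‖) := by
        gcongr
        exacts [hsmall z hz, hsmall y hy]
    _ ≤ η * ‖y - x‖ := by
        rw [hzx_norm]
        nlinarith [mul_nonneg (mul_nonneg hη.le (norm_nonneg (y - x))) (sub_nonneg.2 ht1)]

end Linearization

section Tube

variable {E : Type*} [NormedAddCommGroup E] [NormedSpace ℝ E]

theorem isCompact_segment (x y : E) : IsCompact (segment ℝ x y) := by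
  rw [segment_eq_image]
  exact isCompact_Icc.image (by fun_prop)

theorem cthickening_segment_eq (x y : E) {r : ℝ} (hr : 0 ≤ r) :
    cthickening r (segment ℝ x y) = {p | ∃ t ∈ Icc (0 : ℝ) 1, ‖p - ((1 - t) • x + t • y)‖ ≤ r} := by
  rw [(isCompact_segment x y).cthickening_eq_biUnion_closedBall hr, segment_eq_image]
  ext p
  simp [dist_eq_norm]

theorem cthickening_segment_subset_closedBall (x y : E) {r : ℝ} (hr : 0 ≤ r) :
    cthickening r (segment ℝ x y) ⊆ closedBall x (r + ‖y - x‖) := by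
  have hy : y ∈ closedBall x ‖y - x‖ := by simp [dist_eq_norm]
  have hseg : segment ℝ x y ⊆ closedBall x ‖y - x‖ :=
    (convex_closedBall x _).segment_subset (mem_closedBall_self (norm_nonneg _)) hy
  exact (cthickening_subset_of_subset r hseg).trans (cthickening_closedBall hr (norm_nonneg _) x).le

end Tube

theorem measure_div_two_le_measure_inter {α : Type*} [MeasurableSpace α] {μ : Measure α}
    {K B S : Set α} (hK : μ K ≠ ∞) (hKB : K ⊆ B) (hS : μ (Sᶜ ∩ B) ≤ μ K / 2) :
    μ K / 2 ≤ μ (K ∩ S) := by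
  have hcover : μ K ≤ μ (K ∩ S) + μ K / 2 :=
    calc μ K ≤ μ (K ∩ S) + μ (K \ S) := measure_le_inter_add_sdiff μ K S
      _ ≤ μ (K ∩ S) + μ K / 2 := by
        gcongr
        exact (measure_mono (show K \ S ⊆ Sᶜ ∩ B from fun p hp => ⟨hp.2, hKB hp.1⟩)).trans hS
  exact (ENNReal.add_le_add_iff_right (ENNReal.div_ne_top hK two_ne_zero)).1
    (by rwa [ENNReal.add_halves])

theorem div_four_lt_setIntegral_div_measure {α : Type*} [MeasurableSpace α] {μ : Measure α}
    {K S : Set α} (hK : MeasurableSet K) (hK_top : μ K ≠ ∞) (hK_zero : μ K ≠ 0)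
    (hS : MeasurableSet S) (hKS : μ K / 2 ≤ μ (K ∩ S)) {φ : α → ℝ} (hφK : IntegrableOn φ K μ)
    (hφ : ∀ p, 0 ≤ φ p) {a : ℝ} (ha : 0 < a) (haS : ∀ p ∈ S, a ≤ φ p) :
    a / 4 < (∫ p in K, φ p ∂μ) / (μ K).toReal := by
  have hK_pos : 0 < (μ K).toReal := ENNReal.toReal_pos hK_zero hK_top
  have hKS_top : μ (K ∩ S) ≠ ∞ := measure_ne_top_of_subset inter_subset_left hK_top
  have hKS_real : (μ K).toReal / 2 ≤ μ.real (K ∩ S) := by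
    simpa [measureReal_def] using ENNReal.toReal_mono hKS_top hKS
  rw [lt_div_iff₀ hK_pos]
  calc a / 4 * (μ K).toReal < a * ((μ K).toReal / 2) := by nlinarith
    _ ≤ a * μ.real (K ∩ S) := by gcongr
    _ ≤ ∫ p in K ∩ S, φ p ∂μ := by
        simpa [mul_comm] using setIntegral_ge_of_const_le (hK.inter hS) hKS_top
          (fun p hp => haS p hp.2) (hφK.mono_set inter_subset_left)
    _ ≤ ∫ p in K, φ p ∂μ :=
        setIntegral_mono_set hφK (ae_of_all _ hφ) inter_subset_left.eventuallyLE

section Density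

variable {E : Type*} [NormedAddCommGroup E] [NormedSpace ℝ E] [FiniteDimensional ℝ E]
  [MeasurableSpace E] [BorelSpace E] {μ : Measure E} [μ.IsAddHaarMeasure] {S : Set E} {x : E}

theorem eventually_measure_cthickening_segment_div_two_le_inter
    (hdens : Tendsto (fun ρ => μ (Sᶜ ∩ closedBall x ρ) / μ (closedBall x ρ)) (𝓝[>] 0) (𝓝 0))
    {ε : ℝ} (hε : 0 < ε) :
    ∀ᶠ y in 𝓝[≠] x, μ (cthickening (ε * ‖y - x‖) (segment ℝ x y)) / 2 ≤
      μ (cthickening (ε * ‖y - x‖) (segment ℝ x y) ∩ S) := by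
  set q := ENNReal.ofReal ((ε / (1 + ε)) ^ Module.finrank ℝ E)
  have hq : q ≠ 0 := (ENNReal.ofReal_pos.2 (by positivity)).ne'
  have hscale : ∀ ρ, μ (closedBall x (ε * ρ)) = q * μ (closedBall x ((1 + ε) * ρ)) := by
    intro ρ
    rw [show ε * ρ = ε / (1 + ε) * ((1 + ε) * ρ) by field_simp,
      Measure.addHaar_closedBall_mul_of_pos μ x (by positivity),
      Measure.addHaar_closedBall_center μ x]
  have hdilate : Tendsto (fun ρ : ℝ => (1 + ε) * ρ) (𝓝[>] 0) (𝓝[>] 0) :=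
    tendsto_iff_comap.2 (comap_mulLeft_nhdsGT_zero (by positivity)).ge
  have hsmall : ∀ᶠ ρ in 𝓝[>] 0, μ (Sᶜ ∩ closedBall x ((1 + ε) * ρ)) <
      q / 2 * μ (closedBall x ((1 + ε) * ρ)) := by
    filter_upwards [(hdens.comp hdilate).eventually (gt_mem_nhds (ENNReal.half_pos hq)),
      hdilate self_mem_nhdsWithin] with ρ hρ (hR : 0 < (1 + ε) * ρ)
    exact (ENNReal.div_lt_iff (Or.inl (measure_closedBall_pos μ x hR).ne')
      (Or.inl measure_closedBall_lt_top.ne)).1 hρ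
  filter_upwards [tendsto_norm_sub_self_nhdsNE x hsmall] with y hy
  refine measure_div_two_le_measure_inter (B := closedBall x ((1 + ε) * ‖y - x‖))
    (isCompact_segment x y).cthickening.measure_ne_top
    ((cthickening_segment_subset_closedBall x y (by positivity)).trans_eq (by congr 1; ring)) ?_
  calc μ (Sᶜ ∩ closedBall x ((1 + ε) * ‖y - x‖))
      ≤ q / 2 * μ (closedBall x ((1 + ε) * ‖y - x‖)) := hy.le
    _ = μ (closedBall x (ε * ‖y - x‖)) / 2 := by
        rw [hscale, ENNReal.mul_div_right_comm]
    _ ≤ _ := by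
        gcongr
        exact closedBall_subset_cthickening (left_mem_segment ℝ x y) _

theorem eventually_lt_setIntegral_cthickening_segment_div (hS : MeasurableSet S)
    (hdens : Tendsto (fun ρ => μ (Sᶜ ∩ closedBall x ρ) / μ (closedBall x ρ)) (𝓝[>] 0) (𝓝 0))
    {φ : E → ℝ} (hφ : LocallyIntegrable φ μ) (hφ_nonneg : ∀ p, 0 ≤ φ p) {a : ℝ} (ha : 0 < a)
    (haS : ∀ p ∈ S, a ≤ φ p) {ε : ℝ} (hε : 0 < ε) :
    ∀ᶠ y in 𝓝[≠] x, a / 4 < (∫ p in cthickening (ε * ‖y - x‖) (segment ℝ x y), φ p ∂μ) /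
      (μ (cthickening (ε * ‖y - x‖) (segment ℝ x y))).toReal := by
  filter_upwards [eventually_measure_cthickening_segment_div_two_le_inter hdens hε,
    self_mem_nhdsWithin] with y hy (hyx : y ≠ x)
  have hK := (isCompact_segment x y).cthickening (r := ε * ‖y - x‖)
  have hK_pos : 0 < μ (cthickening (ε * ‖y - x‖) (segment ℝ x y)) :=
    (measure_closedBall_pos μ x (mul_pos hε (norm_pos_iff.2 (sub_ne_zero.2 hyx)))).trans_le
      (measure_mono (closedBall_subset_cthickening (left_mem_segment ℝ x y) _))
  exact div_four_lt_setIntegral_div_measure hK.measurableSet hK.measure_ne_top hK_pos.ne' hS hy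
    (hφ.integrableOn_isCompact hK) hφ_nonneg ha haS

end Density

section Chord

variable {E F : Type*} [NormedAddCommGroup E] [NormedSpace ℝ E] [FiniteDimensional ℝ E]
  [MeasurableSpace E] [BorelSpace E] {μ : Measure E} [μ.IsAddHaarMeasure]
  [NormedAddCommGroup F] [NormedSpace ℝ F]

theorem exists_chord_of_hasFDerivAt_of_density {T : E → F} {L : E →L[ℝ] F} {x v : E}
    (hT : HasFDerivAt T L x) (hv : L v ≠ 0) {Q : Set E} (hQ : Q ∈ 𝓝 x) {S : Set E}
    (hS : MeasurableSet S)
    (hdens : Tendsto (fun ρ => μ (Sᶜ ∩ closedBall x ρ) / μ (closedBall x ρ)) (𝓝[>] 0) (𝓝 0))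
    {φ : E → ℝ} (hφ : LocallyIntegrable φ μ) (hφ_nonneg : ∀ p, 0 ≤ φ p) {a : ℝ} (ha : 0 < a)
    (haS : ∀ p ∈ S, a ≤ φ p) {ε : ℝ} (hε : 0 < ε) :
    ∃ y ∈ Q, ‖NormedSpace.normalize (T y - T x) - NormedSpace.normalize (L v)‖ < ε ∧
      (∀ t ∈ Icc (0 : ℝ) 1,
        ‖T ((1 - t) • x + t • y) - ((1 - t) • T x + t • T y)‖ < ε * ‖y - x‖) ∧
      a / 4 < (∫ p in cthickening (ε * ‖y - x‖) (segment ℝ x y), φ p ∂μ) /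
        (μ (cthickening (ε * ‖y - x‖) (segment ℝ x y))).toReal := by
  have hv0 : v ≠ 0 := by rintro rfl; simp at hv
  have hray : Tendsto (fun s : ℝ => x + s • v) (𝓝[>] 0) (𝓝[≠] x) := by
    refine tendsto_nhdsWithin_iff.2 ⟨?_, ?_⟩
    · have : Tendsto (fun s : ℝ => x + s • v) (𝓝 0) (𝓝 (x + (0 : ℝ) • v)) :=
        (Continuous.tendsto (by fun_prop) _)
      simpa using this.mono_left nhdsWithin_le_nhds
    · filter_upwards [self_mem_nhdsWithin] with s (hs : 0 < s)
      simpa [hs.ne'] using hv0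
  have hnear : ∀ᶠ y in 𝓝[≠] x, y ∈ Q ∧
      (∀ t ∈ Icc (0 : ℝ) 1,
        ‖T ((1 - t) • x + t • y) - ((1 - t) • T x + t • T y)‖ < ε * ‖y - x‖) ∧
      a / 4 < (∫ p in cthickening (ε * ‖y - x‖) (segment ℝ x y), φ p ∂μ) /
        (μ (cthickening (ε * ‖y - x‖) (segment ℝ x y))).toReal := by
    filter_upwards [mem_nhdsWithin_of_mem_nhds hQ,
      nhdsWithin_le_nhds (hT.eventually_norm_sub_chord_le (half_pos hε)),
      eventually_lt_setIntegral_cthickening_segment_div hS hdens hφ hφ_nonneg ha haS hε,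
      self_mem_nhdsWithin] with y hyQ hchord hmean (hyx : y ≠ x)
    have hyx_pos : 0 < ‖y - x‖ := norm_pos_iff.2 (sub_ne_zero.2 hyx)
    exact ⟨hyQ, fun t ht => (hchord t ht).trans_lt (by nlinarith), hmean⟩
  have hdir := (hT.tendsto_normalize_sub hv).eventually (ball_mem_nhds _ hε)
  obtain ⟨s, hdir_s, hs⟩ := (hdir.and (hray.eventually hnear)).exists
  exact ⟨x + s • v, hs.1, by simpa [dist_eq_norm] using hdir_s, hs.2⟩

end Chord

theorem exists_pos_measure_setOf_le_inter {α : Type*} [MeasurableSpace α] {μ : Measure α}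
    {s : Set α} {φ : α → ℝ} (hφ : ∀ x, 0 ≤ φ x) (hpos : 0 < ∫ x in s, φ x ∂μ) :
    ∃ a, 0 < a ∧ 0 < μ ({x | a ≤ φ x} ∩ s) := by
  -- a non-integrable function has integral `0`
  rw [setIntegral_pos_iff_support_of_nonneg_ae (ae_of_all _ hφ)
    (Integrable.of_integral_ne_zero hpos.ne')] at hpos
  by_contra! hnull
  have hsupp : Function.support φ ∩ s ⊆ ⋃ n : ℕ, {x | 1 / ((n : ℝ) + 1) ≤ φ x} ∩ s := by
    rintro x ⟨hx, hxs⟩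
    obtain ⟨n, hn⟩ := exists_nat_one_div_lt ((hφ x).lt_of_ne' hx)
    exact mem_iUnion.2 ⟨n, hn.le, hxs⟩
  exact hpos.ne' (measure_mono_null hsupp
    (measure_iUnion_null fun n => nonpos_iff_eq_zero.1 (hnull _ Nat.one_div_pos_of_nat)))

section Cube

variable {ι : Type*} [Fintype ι] (a b : ℝ)

theorem isOpen_setOf_forall_mem_Ioo : IsOpen {x : EuclideanSpace ℝ ι | ∀ i, x i ∈ Ioo a b} := by
  simp only [ofPred_forall]
  exact isOpen_iInter_of_finite fun i => isOpen_Ioo.preimage (EuclideanSpace.proj i).continuous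

theorem setOf_forall_mem_Ioo_ae_eq_Icc :
    {x : EuclideanSpace ℝ ι | ∀ i, x i ∈ Ioo a b} =ᵐ[volume] {x | ∀ i, x i ∈ Icc a b} := by
  have hIoo : {x : EuclideanSpace ℝ ι | ∀ i, x i ∈ Ioo a b}
      = (MeasurableEquiv.toLp 2 (ι → ℝ)).symm ⁻¹' univ.pi fun _ => Ioo a b := by
    ext x; simp
  have hIcc : {x : EuclideanSpace ℝ ι | ∀ i, x i ∈ Icc a b}
      = (MeasurableEquiv.toLp 2 (ι → ℝ)).symm ⁻¹' Icc (fun _ => a) (fun _ => b) := by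
    ext x; simp [Pi.le_def, forall_and]
  rw [hIoo, hIcc]
  exact (EuclideanSpace.volume_preserving_symm_measurableEquiv_toLp ι).quasiMeasurePreserving
    |>.preimage_ae_eq Measure.univ_pi_Ioo_ae_eq_Icc

end Cube

theorem continuous_version_general
    (d : ℕ)
    (T : EuclideanSpace ℝ (Fin d) → EuclideanSpace ℝ (Fin (d + 1)))
    (hlip : ∀ x y : EuclideanSpace ℝ (Fin d),
      (∀ i, x i ∈ Icc (-1 : ℝ) 1) → (∀ i, y i ∈ Icc (-1 : ℝ) 1) → ‖T x - T y‖ ≤ ‖x - y‖)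
    (hderiv : ∀ x : EuclideanSpace ℝ (Fin d), (∀ i, x i ∈ Ioo (-1 : ℝ) 1) →
      ∀ L : EuclideanSpace ℝ (Fin d) →L[ℝ] EuclideanSpace ℝ (Fin (d + 1)),
        HasFDerivAt T L x → L ≠ 0)
    (φ : EuclideanSpace ℝ (Fin d) → ℝ)
    (hφmeas : Measurable φ) (hφnonneg : ∀ x, 0 ≤ φ x)
    (hφbdd : ∃ C : ℝ, ∀ x, φ x ≤ C)
    (hφpos : 0 < ∫ x in {x : EuclideanSpace ℝ (Fin d) | ∀ i, x i ∈ Icc (-1 : ℝ) 1}, φ x) :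
    ∃ δ : ℝ, 0 < δ ∧
    ∃ x : EuclideanSpace ℝ (Fin d), (∀ i, x i ∈ Icc (-1 : ℝ) 1) ∧
    ∃ w : EuclideanSpace ℝ (Fin (d + 1)), ‖w‖ = 1 ∧
    ∃ ε₀ : ℝ, 0 < ε₀ ∧ ∀ ε : ℝ, 0 < ε → ε < ε₀ →
      ∃ y : EuclideanSpace ℝ (Fin d), (∀ i, y i ∈ Icc (-1 : ℝ) 1) ∧
        -- (r-i)
        ‖‖T y - T x‖⁻¹ • (T y - T x) - w‖ < ε ∧
        -- (r-ii)
        (∀ t ∈ Icc (0 : ℝ) 1,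
          ‖T ((1 - t) • x + t • y) - ((1 - t) • T x + t • T y)‖ < ε * ‖y - x‖) ∧
        -- (r-iii)
        (δ < (∫ u in {p : EuclideanSpace ℝ (Fin d) |
                ∃ t ∈ Icc (0 : ℝ) 1, ‖p - ((1 - t) • x + t • y)‖ ≤ ε * ‖y - x‖}, φ u) /
              (volume {p : EuclideanSpace ℝ (Fin d) |
                ∃ t ∈ Icc (0 : ℝ) 1, ‖p - ((1 - t) • x + t • y)‖ ≤ ε * ‖y - x‖}).toReal) := by
  set Q := {x : EuclideanSpace ℝ (Fin d) | ∀ i, x i ∈ Icc (-1 : ℝ) 1}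
  set U := {x : EuclideanSpace ℝ (Fin d) | ∀ i, x i ∈ Ioo (-1 : ℝ) 1}
  have hUQ : U ⊆ Q := fun x hx i => Ioo_subset_Icc_self (hx i)
  have hU : IsOpen U := isOpen_setOf_forall_mem_Ioo (-1) 1
  obtain ⟨a, ha, hS_pos⟩ := exists_pos_measure_setOf_le_inter hφnonneg
    (hφpos.trans_eq (setIntegral_congr_set (setOf_forall_mem_Ioo_ae_eq_Icc (-1) 1)).symm)
  set S := {x | a ≤ φ x} ∩ U
  have hS : MeasurableSet S := (measurableSet_le measurable_const hφmeas).inter hU.measurableSet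
  have hT_lip : LipschitzOnWith 1 T Q := LipschitzOnWith.of_dist_le_mul fun p hp q hq => by
    simpa [dist_eq_norm] using hlip p q hp hq
  obtain ⟨x, hxS, hT_diff, hdens⟩ := Measure.exists_mem_of_measure_ne_zero_of_ae hS_pos.ne'
    (ae_restrict_of_ae (hT_lip.ae_differentiableWithinAt_of_mem.and
      (Besicovitch.ae_tendsto_measure_inter_div_of_measurableSet volume hS.compl)))
  rw [indicator_of_notMem (not_not_intro hxS)] at hdens
  have hQ : Q ∈ 𝓝 x := mem_of_superset (hU.mem_nhds hxS.2) hUQ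
  have hT := ((hT_diff (mem_of_mem_nhds hQ)).differentiableAt hQ).hasFDerivAt
  obtain ⟨v, hv⟩ := DFunLike.ne_iff.1 (hderiv x hxS.2 _ hT)
  obtain ⟨C, hC⟩ := hφbdd
  have hφ : LocallyIntegrable φ volume := (locallyIntegrable_const C).mono
    hφmeas.aestronglyMeasurable (ae_of_all _ fun p => by
      simpa [abs_of_nonneg (hφnonneg p)] using (hC p).trans (le_abs_self C))
  refine ⟨a / 4, by positivity, x, hUQ hxS.2, _, NormedSpace.norm_normalize hv, 1, one_pos,
    fun ε hε _ => ?_⟩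
  obtain ⟨y, hyQ, hdir, hchord, hmean⟩ := exists_chord_of_hasFDerivAt_of_density hT hv hQ hS hdens
    hφ hφnonneg ha (fun p hp => hp.1) hε
  refine ⟨y, hyQ, hdir, hchord, ?_⟩
  rwa [← cthickening_segment_eq x y (by positivity)]

theorem continuous_version
    (d : ℕ) (hd : 0 < d)
    (T : EuclideanSpace ℝ (Fin d) → EuclideanSpace ℝ (Fin (d + 1)))
    (hmaps : ∀ x : EuclideanSpace ℝ (Fin d),
      (∀ i, x i ∈ Icc (-1 : ℝ) 1) → ∀ i, T x i ∈ Icc (-1 : ℝ) 1)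
    (hlip : ∀ x y : EuclideanSpace ℝ (Fin d),
      (∀ i, x i ∈ Icc (-1 : ℝ) 1) → (∀ i, y i ∈ Icc (-1 : ℝ) 1) → ‖T x - T y‖ ≤ ‖x - y‖)
    (hderiv : ∀ x : EuclideanSpace ℝ (Fin d), (∀ i, x i ∈ Ioo (-1 : ℝ) 1) →
      ∀ L : EuclideanSpace ℝ (Fin d) →L[ℝ] EuclideanSpace ℝ (Fin (d + 1)),
        HasFDerivAt T L x → L ≠ 0)
    (φ : EuclideanSpace ℝ (Fin d) → ℝ)
    (hφmeas : Measurable φ) (hφnonneg : ∀ x, 0 ≤ φ x)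
    (hφbdd : ∃ C : ℝ, ∀ x, φ x ≤ C)
    (hφsupp : ∀ x : EuclideanSpace ℝ (Fin d), ¬ (∀ i, x i ∈ Icc (-1 : ℝ) 1) → φ x = 0)
    (hφpos : 0 < ∫ x in {x : EuclideanSpace ℝ (Fin d) | ∀ i, x i ∈ Icc (-1 : ℝ) 1}, φ x) :
    ∃ δ : ℝ, 0 < δ ∧
    ∃ x : EuclideanSpace ℝ (Fin d), (∀ i, x i ∈ Icc (-1 : ℝ) 1) ∧
    ∃ w : EuclideanSpace ℝ (Fin (d + 1)), ‖w‖ = 1 ∧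
    ∃ ε₀ : ℝ, 0 < ε₀ ∧ ∀ ε : ℝ, 0 < ε → ε < ε₀ →
      ∃ y : EuclideanSpace ℝ (Fin d), (∀ i, y i ∈ Icc (-1 : ℝ) 1) ∧
        -- (r-i)
        ‖‖T y - T x‖⁻¹ • (T y - T x) - w‖ < ε ∧
        -- (r-ii)
        (∀ t ∈ Icc (0 : ℝ) 1,
          ‖T ((1 - t) • x + t • y) - ((1 - t) • T x + t • T y)‖ < ε * ‖y - x‖) ∧
        -- (r-iii)
        (δ < (∫ u in {p : EuclideanSpace ℝ (Fin d) |
                ∃ t ∈ Icc (0 : ℝ) 1, ‖p - ((1 - t) • x + t • y)‖ ≤ ε * ‖y - x‖}, φ u) /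
              (volume {p : EuclideanSpace ℝ (Fin d) |
                ∃ t ∈ Icc (0 : ℝ) 1, ‖p - ((1 - t) • x + t • y)‖ ≤ ε * ‖y - x‖}).toReal) :=
  continuous_version_general d T hlip hderiv φ hφmeas hφnonneg hφbdd hφpos
end

section
/- Let d, k, N, b ∈ N with b ≥ 1, let M > 0, let f : Z^d → Z^{d+1} be Lipschitz with constant M, and let w = (w₁, …, w_{d+1}) ∈ S^d with |w₁| ≥ d^{−1/2}. Let a₂, …, a_{d+1} ∈ Z satisfy |w_l/w₁ − a_l/b| ≤ 1/(bN) for all l ∈ {2, …, d+1}, set ε = 1/(bN), and assume ε < d^{−1/2}/2. Let ℓ : [0,1] → Z^d be a generalized line segment with ε·m_ℓ > 14√d and (f∘ℓ)(0) = 0, satisfying: (z-i) ‖((f∘ℓ)(1) − (f∘ℓ)(0))/‖(f∘ℓ)(1) − (f∘ℓ)(0)‖₂ − w‖₂ < ε, and (z-ii) for every t ∈ [0,1], ‖(f∘ℓ)(t) − [(1−t)(f∘ℓ)(0) + t(f∘ℓ)(1)]‖₂ < ε·M·m_ℓ. Set s = (b, a₂, …, a_{d+1}) ∈ Z^{d+1},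 let K_Z = {z ∈ Z^d : min_{t∈[0,1]} ‖z − ℓ(t)‖₂ ≤ ε·m_ℓ}, and let E be the set of lines in R^{d+1} of the form {x − t·s : t ∈ R} for x ∈ f(K_Z). Then there is a constant c₂ > 0 depending only on d and M such that |E| ≤ c₂·m_ℓ^d/(b^{d−1}·N^d). -/
open Set

/-- The generalized line segment `t ↦ ⌊(1-t)x + ty⌋` determined by `x, y ∈ ℝ^d`. -/
noncomputable def glSeg {d : ℕ} (x y : Fin d → ℝ) (t : ℝ) : Fin d → ℤ :=
  fun i => ⌊(1 - t) * x i + t * y i⌋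

/-- `m_ℓ = ‖ℓ(1) - ℓ(0)‖₂` for the generalized line segment determined by `x, y`. -/
noncomputable def mseg {d : ℕ} (x y : Fin d → ℝ) : ℝ :=
  euclNorm (zr (glSeg x y 1) - zr (glSeg x y 0))

/-- The discrete cylinder of radius `ρ` around the generalized line segment
determined by `x, y`. -/
def cylZ {d : ℕ} (x y : Fin d → ℝ) (ρ : ℝ) : Set (Fin d → ℤ) :=
  {z | ∃ t ∈ Icc (0 : ℝ) 1, euclNorm (zr z - zr (glSeg x y t)) ≤ ρ}

/-!
A line parallel to `s = (b, a)` is determined by the point where it meets the hyperplane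
`p 0 = 0`, so `|E|` is at most the number of projections along `s` of the points `f z`, `z ∈ K_Z`.
Each `f z` lies within `2εMm_ℓ` of the segment from `0` to `f(ℓ(1))`, whose direction is
`ε`-close to `w`, and `w` is `ε`-close to `s` in ratios; hence all these projections lie in a
cube of radius `O(εMm_ℓ)`. Projections of integer points along `s` lie on the `b` translates
`ℤ^d - (r / b) a`, `0 ≤ r < b`, each of which meets the cube in `O((εm_ℓ)^d)` points as `εm_ℓ ≥ 1`.
So `|E| = O(b (εm_ℓ)^d) = O(m_ℓ^d / (b^(d-1) N^d))`.
-/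

lemma euclNorm_nonneg {n : ℕ} (x : Fin n → ℝ) : 0 ≤ euclNorm x := Real.sqrt_nonneg _

lemma abs_apply_le_euclNorm {n : ℕ} (x : Fin n → ℝ) (i : Fin n) : |x i| ≤ euclNorm x := by
  rw [← Real.sqrt_sq_eq_abs]
  exact Real.sqrt_le_sqrt (Finset.single_le_sum (fun j _ => sq_nonneg (x j)) (Finset.mem_univ i))

lemma euclNorm_eq_norm {n : ℕ} (x : Fin n → ℝ) : euclNorm x = ‖WithLp.toLp 2 x‖ := by
  simp [EuclideanSpace.norm_eq, euclNorm]

lemma euclNorm_sub_le_euclNorm_sub_add_euclNorm_sub {n : ℕ} (x y z : Fin n → ℝ) :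
    euclNorm (x - z) ≤ euclNorm (x - y) + euclNorm (y - z) := by
  simpa only [euclNorm_eq_norm, WithLp.toLp_sub] using
    norm_sub_le_norm_sub_add_norm_sub (WithLp.toLp 2 x) (WithLp.toLp 2 y) (WithLp.toLp 2 z)

lemma euclNorm_smul_inv_smul {n : ℕ} (x : Fin n → ℝ) : euclNorm x • (euclNorm x)⁻¹ • x = x := by
  by_cases hx : euclNorm x = 0
  · have : x = 0 := by
      rw [euclNorm_eq_norm, norm_eq_zero] at hx
      exact (WithLp.toLp_eq_zero 2).mp hx
    simp [this]
  · rw [smul_smul, mul_inv_cancel₀ hx, one_smul]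

/-- The point where the line through `X` in direction `s` meets the hyperplane `{p | p 0 = 0}`,
in the coordinates of that hyperplane. -/
noncomputable def projAlong {n : ℕ} (s : Fin (n + 1) → ℝ) : (Fin (n + 1) → ℝ) →ₗ[ℝ] (Fin n → ℝ) :=
  LinearMap.pi fun l => LinearMap.proj l.succ - (s l.succ / s 0) • LinearMap.proj 0

@[simp]
lemma projAlong_apply {n : ℕ} (s X : Fin (n + 1) → ℝ) (l : Fin n) :
    projAlong s X l = X l.succ - s l.succ / s 0 * X 0 :=
  rfl

lemma abs_projAlong_le {n : ℕ} (s X : Fin (n + 1) → ℝ) (l : Fin n) :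
    |projAlong s X l| ≤ (1 + |s l.succ / s 0|) * euclNorm X := by
  have h1 := abs_apply_le_euclNorm X l.succ
  have h0 := abs_apply_le_euclNorm X 0
  calc |projAlong s X l| ≤ |X l.succ| + |s l.succ / s 0| * |X 0| := by
        rw [projAlong_apply, ← abs_mul]; exact abs_sub _ _
    _ ≤ (1 + |s l.succ / s 0|) * euclNorm X := by nlinarith [abs_nonneg (s l.succ / s 0)]

lemma abs_projAlong_le_of_abs_div_sub_le {n : ℕ} {s w : Fin (n + 1) → ℝ} {ε : ℝ} {l : Fin n}
    (hw0 : w 0 ≠ 0) (hw1 : |w 0| ≤ 1) (h : |w l.succ / w 0 - s l.succ / s 0| ≤ ε) :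
    |projAlong s w l| ≤ ε := by
  have : projAlong s w l = w 0 * (w l.succ / w 0 - s l.succ / s 0) := by
    rw [projAlong_apply]; field_simp
  rw [this, abs_mul]
  exact (mul_le_of_le_one_left (abs_nonneg _) hw1).trans h

def lineAlong {n : ℕ} (s X : Fin n → ℝ) : Set (Fin n → ℝ) := {p | ∃ t : ℝ, p = X - t • s}

lemma lineAlong_sub_smul {n : ℕ} (s X : Fin n → ℝ) (c : ℝ) :
    lineAlong s (X - c • s) = lineAlong s X := by
  ext p
  constructor
  · rintro ⟨t, rfl⟩
    exact ⟨c + t, by rw [add_smul]; abel⟩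
  · rintro ⟨t, rfl⟩
    exact ⟨t - c, by rw [sub_smul]; abel⟩

lemma lineAlong_cons_zero_projAlong {n : ℕ} {s : Fin (n + 1) → ℝ} (hs : s 0 ≠ 0)
    (X : Fin (n + 1) → ℝ) : lineAlong s (Fin.cons 0 (projAlong s X)) = lineAlong s X := by
  have : (Fin.cons 0 (projAlong s X) : Fin (n + 1) → ℝ) = X - (X 0 / s 0) • s := by
    ext i
    refine Fin.cases ?_ (fun l => ?_) i
    · simp [hs]
    · simp only [Fin.cons_succ, projAlong_apply, Pi.sub_apply, Pi.smul_apply, smul_eq_mul]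
      ring
  rw [this, lineAlong_sub_smul]

lemma ncard_lineAlong_le {α : Type*} {n : ℕ} {s : Fin (n + 1) → ℝ} (hs : s 0 ≠ 0)
    {K : Set α} {g : α → Fin (n + 1) → ℝ} {F : Finset (Fin n → ℝ)}
    (hF : (fun z => projAlong s (g z)) '' K ⊆ F) :
    {L | ∃ z ∈ K, L = lineAlong s (g z)}.ncard ≤ F.card := by
  have : {L | ∃ z ∈ K, L = lineAlong s (g z)} =
      (fun v => lineAlong s (Fin.cons 0 v)) '' ((fun z => projAlong s (g z)) '' K) := by
    simp only [Set.image_image, lineAlong_cons_zero_projAlong hs]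
    ext L
    simp [eq_comm]
  rw [this, ← Set.ncard_coe_finset]
  exact (Set.ncard_image_le (F.finite_toSet.subset hF)).trans (Set.ncard_le_ncard hF)

noncomputable def intCube {n : ℕ} (c : Fin n → ℝ) (R : ℝ) : Finset (Fin n → ℤ) :=
  Fintype.piFinset fun l => Finset.Icc ⌈c l - R⌉ ⌊c l + R⌋

lemma mem_intCube {n : ℕ} {c : Fin n → ℝ} {R : ℝ} {Q : Fin n → ℤ} :
    Q ∈ intCube c R ↔ ∀ l, |(Q l : ℝ) - c l| ≤ R := by
  simp only [intCube, Fintype.mem_piFinset, Finset.mem_Icc, Int.ceil_le, Int.le_floor, abs_le]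
  refine forall_congr' fun l => ?_
  constructor <;> rintro ⟨h1, h2⟩ <;> constructor <;> linarith

lemma card_Icc_ceil_floor_le (c : ℝ) {R : ℝ} (hR : 0 ≤ R) :
    ((Finset.Icc ⌈c - R⌉ ⌊c + R⌋).card : ℝ) ≤ 2 * R + 1 := by
  have hfl := Int.floor_le (c + R)
  have hce := Int.le_ceil (c - R)
  rw [Int.card_Icc, ← Int.cast_natCast, Int.toNat_eq_max]
  push_cast
  exact max_le (by linarith) (by linarith)

lemma card_intCube_le {n : ℕ} (c : Fin n → ℝ) {R : ℝ} (hR : 0 ≤ R) :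
    ((intCube c R).card : ℝ) ≤ (2 * R + 1) ^ n := by
  rw [intCube, Fintype.card_piFinset, Nat.cast_prod]
  calc ∏ l, ((Finset.Icc ⌈c l - R⌉ ⌊c l + R⌋).card : ℝ) ≤ ∏ _l : Fin n, (2 * R + 1) :=
        Finset.prod_le_prod (fun _ _ => Nat.cast_nonneg _) fun l _ => card_Icc_ceil_floor_le _ hR
    _ = (2 * R + 1) ^ n := by simp

/-- Projected along `(b, a)`, the integer points fall on the `b` translates `ℤⁿ - (r / b) a`,
`0 ≤ r < b`; these are their points in the cube of radius `R` centred at `0`. -/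
noncomputable def projLatticeCube {n : ℕ} (b : ℕ) (a : Fin n → ℤ) (R : ℝ) : Finset (Fin n → ℝ) :=
  (Finset.Ico (0 : ℤ) b).biUnion fun r =>
    (intCube (((r : ℝ) / b) • zr a) R).image fun Q => zr Q - ((r : ℝ) / b) • zr a

lemma card_projLatticeCube_le {n : ℕ} (b : ℕ) (a : Fin n → ℤ) {R : ℝ} (hR : 0 ≤ R) :
    ((projLatticeCube b a R).card : ℝ) ≤ b * (2 * R + 1) ^ n := by
  calc ((projLatticeCube b a R).card : ℝ)
      ≤ ∑ r ∈ Finset.Ico (0 : ℤ) b, ((intCube (((r : ℝ) / b) • zr a) R).card : ℝ) := by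
        rw [← Nat.cast_sum]
        exact Nat.cast_le.mpr <|
          Finset.card_biUnion_le.trans (Finset.sum_le_sum fun _ _ => Finset.card_image_le)
    _ ≤ ∑ _r ∈ Finset.Ico (0 : ℤ) b, (2 * R + 1) ^ n :=
        Finset.sum_le_sum fun _ _ => card_intCube_le _ hR
    _ = b * (2 * R + 1) ^ n := by simp

lemma projAlong_int_eq {n b : ℕ} (hb : 0 < b) (a : Fin n → ℤ) (X : Fin (n + 1) → ℤ) :
    projAlong (Fin.cons (b : ℝ) (zr a)) (zr X) =
      zr (fun l => X l.succ - X 0 / b * a l) - ((X 0 % b : ℤ) / b : ℝ) • zr a := by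
  have hb' : (b : ℝ) ≠ 0 := by positivity
  have hdiv : (X 0 : ℝ) = b * ((X 0 / b : ℤ) : ℝ) + ((X 0 % b : ℤ) : ℝ) := by
    exact_mod_cast (Int.mul_ediv_add_emod (X 0) b).symm
  ext l
  simp only [projAlong_apply, zr, Fin.cons_succ, Fin.cons_zero, Pi.sub_apply, Pi.smul_apply,
    smul_eq_mul, Int.cast_sub, Int.cast_mul]
  rw [hdiv]
  field_simp
  ring

lemma projAlong_int_image_subset {α : Type*} {n b : ℕ} (hb : 0 < b) (a : Fin n → ℤ) {R : ℝ}
    {S : Set α} {g : α → Fin (n + 1) → ℤ}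
    (hS : ∀ z ∈ S, ∀ l, |projAlong (Fin.cons (b : ℝ) (zr a)) (zr (g z)) l| ≤ R) :
    (fun z => projAlong (Fin.cons (b : ℝ) (zr a)) (zr (g z))) '' S ⊆ projLatticeCube b a R := by
  rintro _ ⟨z, hz, rfl⟩
  have hbZ : (0 : ℤ) < b := by exact_mod_cast hb
  simp only [projLatticeCube, Finset.coe_biUnion, Finset.coe_image, Finset.coe_Ico,
    Set.mem_iUnion, Set.mem_image, Finset.mem_coe, exists_prop]
  refine ⟨g z 0 % b, ⟨Int.emod_nonneg _ hbZ.ne', Int.emod_lt_of_pos _ hbZ⟩,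
    fun l => g z l.succ - g z 0 / b * a l, mem_intCube.mpr fun l => ?_,
    (projAlong_int_eq hb a (g z)).symm⟩
  have h := hS z hz l
  rw [projAlong_int_eq hb a (g z)] at h
  simpa [zr] using h

lemma abs_projAlong_le_of_direction_near {n : ℕ} {s U w : Fin (n + 1) → ℝ} {ε κ : ℝ}
    {l : Fin n}
    (hκ : |s l.succ / s 0| ≤ κ) (hw : |projAlong s w l| ≤ ε)
    (hU : euclNorm ((euclNorm U)⁻¹ • U - w) ≤ ε) :
    |projAlong s U l| ≤ (2 + κ) * ε * euclNorm U := by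
  have hdecomp : U = euclNorm U • (((euclNorm U)⁻¹ • U - w) + w) := by
    rw [sub_add_cancel, euclNorm_smul_inv_smul]
  have hv := abs_projAlong_le s ((euclNorm U)⁻¹ • U - w) l
  have hn := euclNorm_nonneg U
  have hε : 0 ≤ ε := (euclNorm_nonneg _).trans hU
  rw [hdecomp, map_smul, map_add, Pi.smul_apply, Pi.add_apply, smul_eq_mul, abs_mul,
    abs_of_nonneg hn, ← hdecomp]
  calc euclNorm U * |projAlong s ((euclNorm U)⁻¹ • U - w) l + projAlong s w l|
      ≤ euclNorm U * ((1 + κ) * ε + ε) := by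
        gcongr
        refine (abs_add_le _ _).trans (add_le_add (hv.trans ?_) hw)
        exact mul_le_mul (by linarith) hU (euclNorm_nonneg _)
          (by linarith [abs_nonneg (s l.succ / s 0)])
    _ = (2 + κ) * ε * euclNorm U := by ring

lemma abs_projAlong_le_of_mem_cylZ {d : ℕ} {f : (Fin d → ℤ) → (Fin (d + 1) → ℤ)} {M ε κ : ℝ}
    {s w : Fin (d + 1) → ℝ} {x y : Fin d → ℝ} {z : Fin d → ℤ} {l : Fin d}
    (hf : ∀ p q, euclNorm (zr (f p) - zr (f q)) ≤ M * euclNorm (zr p - zr q)) (hM : 0 ≤ M)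
    (hκ : |s l.succ / s 0| ≤ κ) (hw : |projAlong s w l| ≤ ε) (h0 : f (glSeg x y 0) = 0)
    (hdir : euclNorm ((euclNorm (zr (f (glSeg x y 1)) - zr (f (glSeg x y 0))))⁻¹ •
      (zr (f (glSeg x y 1)) - zr (f (glSeg x y 0))) - w) < ε)
    (hstraight : ∀ t ∈ Icc (0 : ℝ) 1, euclNorm (zr (f (glSeg x y t)) -
      ((1 - t) • zr (f (glSeg x y 0)) + t • zr (f (glSeg x y 1)))) < ε * M * mseg x y)
    (hz : z ∈ cylZ x y (ε * mseg x y)) :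
    |projAlong s (zr (f z)) l| ≤ (4 + 3 * κ) * M * (ε * mseg x y) := by
  set U := zr (f (glSeg x y 1))
  set m := mseg x y
  have hf0 : zr (f (glSeg x y 0)) = 0 := by
    rw [h0]; funext i; simp [zr]
  simp only [hf0, sub_zero, smul_zero, zero_add] at hdir hstraight
  have hU : euclNorm U ≤ M * m := by
    have := hf (glSeg x y 1) (glSeg x y 0)
    rw [hf0, sub_zero] at this
    exact this
  obtain ⟨t, ht, hzt⟩ := hz
  have hnear : euclNorm (zr (f z) - t • U) ≤ 2 * (M * (ε * m)) :=
    calc euclNorm (zr (f z) - t • U)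
        ≤ euclNorm (zr (f z) - zr (f (glSeg x y t))) + euclNorm (zr (f (glSeg x y t)) - t • U) :=
          euclNorm_sub_le_euclNorm_sub_add_euclNorm_sub _ _ _
      _ ≤ M * (ε * m) + M * (ε * m) :=
          add_le_add ((hf _ _).trans (mul_le_mul_of_nonneg_left hzt hM))
            ((hstraight t ht).le.trans_eq (by ring))
      _ = 2 * (M * (ε * m)) := by ring
  have hκ0 : 0 ≤ κ := (abs_nonneg _).trans hκ
  have hε : 0 ≤ ε := (euclNorm_nonneg _).trans hdir.le
  have hfar := abs_projAlong_le s (zr (f z) - t • U) l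
  have hdirU := abs_projAlong_le_of_direction_near hκ hw hdir.le
  have hsplit :
      projAlong s (zr (f z)) l = projAlong s (zr (f z) - t • U) l + t * projAlong s U l := by
    simp only [map_sub, map_smul, Pi.sub_apply, Pi.smul_apply, smul_eq_mul]
    ring
  rw [hsplit]
  calc |projAlong s (zr (f z) - t • U) l + t * projAlong s U l|
      ≤ (1 + κ) * (2 * (M * (ε * m))) + 1 * ((2 + κ) * ε * (M * m)) := by
        refine (abs_add_le _ _).trans (add_le_add ?_ ?_)
        · exact hfar.trans (mul_le_mul (by linarith) hnear (euclNorm_nonneg _) (by linarith))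
        · rw [abs_mul, abs_of_nonneg ht.1]
          exact mul_le_mul ht.2 (hdirU.trans (by gcongr)) (abs_nonneg _) zero_le_one
    _ = (4 + 3 * κ) * M * (ε * m) := by ring

lemma abs_le_of_abs_div_apply_zero_sub_le {n : ℕ} {w : Fin (n + 1) → ℝ} {c q ε : ℝ}
    {i : Fin (n + 1)}
    (hw : euclNorm w ≤ 1) (hc : 0 < c) (hw0 : 1 / c ≤ |w 0|) (h : |w i / w 0 - q| ≤ ε) :
    |q| ≤ c + ε := by
  have hwi : |w i| ≤ 1 := (abs_apply_le_euclNorm w i).trans hw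
  have hw0' : 1 ≤ c * |w 0| := by rwa [div_le_iff₀' hc] at hw0
  have hratio : |w i / w 0| ≤ c := by
    rw [abs_div, div_le_iff₀ ((one_div_pos.mpr hc).trans_le hw0)]
    linarith
  linarith [abs_sub_abs_le_abs_sub q (w i / w 0), abs_sub_comm q (w i / w 0)]

lemma mul_pow_one_div_mul_eq {b N C m : ℝ} {d : ℕ} (hd : 0 < d) (hb : b ≠ 0) (hN : N ≠ 0) :
    b * (C * (1 / (b * N) * m)) ^ d = C ^ d * m ^ d / (b ^ (d - 1) * N ^ d) := by
  obtain ⟨e, rfl⟩ : ∃ e, d = e + 1 := ⟨d - 1, by omega⟩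
  simp only [Nat.add_sub_cancel, mul_pow, one_div, inv_pow, pow_succ b e]
  field_simp

theorem line_cover_cardinality_bound
    (d : ℕ) (hd : 0 < d) (M : ℝ) (hM : 0 < M) :
    ∃ c₂ : ℝ, 0 < c₂ ∧
      ∀ (k N b : ℕ) (_hk : 0 < k), 1 ≤ b →
      ∀ f : (Fin d → ℤ) → (Fin (d + 1) → ℤ),
        (∀ p q : Fin d → ℤ, euclNorm (zr (f p) - zr (f q)) ≤ M * euclNorm (zr p - zr q)) →
      ∀ w : Fin (d + 1) → ℝ, euclNorm w = 1 → 1 / Real.sqrt d ≤ |w 0| →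
      ∀ a : Fin d → ℤ,
        (∀ l : Fin d, |w l.succ / w 0 - (a l : ℝ) / (b : ℝ)| ≤ 1 / ((b : ℝ) * N)) →
        1 / ((b : ℝ) * N) < 1 / (2 * Real.sqrt d) →
      ∀ x y : Fin d → ℝ,
        (1 / ((b : ℝ) * N)) * mseg x y > 14 * Real.sqrt d →
        f (glSeg x y 0) = 0 →
        -- (z-i)
        euclNorm ((euclNorm (zr (f (glSeg x y 1)) - zr (f (glSeg x y 0))))⁻¹ •
            (zr (f (glSeg x y 1)) - zr (f (glSeg x y 0))) - w) < 1 / ((b : ℝ) * N) →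
        -- (z-ii)
        (∀ t ∈ Icc (0 : ℝ) 1,
          euclNorm (zr (f (glSeg x y t)) -
              ((1 - t) • zr (f (glSeg x y 0)) + t • zr (f (glSeg x y 1)))) <
            (1 / ((b : ℝ) * N)) * M * mseg x y) →
        (({L : Set (Fin (d + 1) → ℝ) |
            ∃ z ∈ cylZ x y ((1 / ((b : ℝ) * N)) * mseg x y),
              L = {p | ∃ t : ℝ,
                p = zr (f z) - t • ((Fin.cons (b : ℝ) (fun l => (a l : ℝ))) : Fin (d + 1) → ℝ)}}.ncard : ℝ) ≤
          c₂ * mseg x y ^ d / ((b : ℝ) ^ (d - 1) * (N : ℝ) ^ d)) := by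
  have hsd : 1 ≤ Real.sqrt d := Real.one_le_sqrt.mpr (by exact_mod_cast hd)
  set κ := Real.sqrt d + 1
  set C := 2 * (4 + 3 * κ) * M + 1
  refine ⟨C ^ d, by positivity, ?_⟩
  intro _ N b _ hb f hf w hw hw0 a ha _ x y hm h0 hdir hstraight
  set ε := 1 / ((b : ℝ) * N)
  set m := mseg x y
  have hεm : 1 ≤ ε * m := by linarith
  have hε : 0 < ε := pos_of_mul_pos_left (by linarith : 0 < ε * m) (euclNorm_nonneg _)
  have hN : (1 : ℝ) ≤ N := by
    have : N ≠ 0 := by rintro rfl; simp [ε] at hε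
    exact_mod_cast Nat.one_le_iff_ne_zero.mpr this
  have hb' : (1 : ℝ) ≤ b := by exact_mod_cast hb
  have hε1 : ε ≤ 1 := div_le_one_of_le₀ (one_le_mul_of_one_le_of_one_le hb' hN) (by positivity)
  have hw0' : w 0 ≠ 0 := fun h => by simp [h] at hw0; linarith
  have hκ : ∀ l : Fin d, |(a l : ℝ) / b| ≤ κ := fun l =>
    (abs_le_of_abs_div_apply_zero_sub_le hw.le (by positivity) hw0 (ha l)).trans (by linarith)
  have hproj : ∀ z ∈ cylZ x y (ε * m), ∀ l,
      |projAlong (Fin.cons (b : ℝ) (zr a)) (zr (f z)) l| ≤ (4 + 3 * κ) * M * (ε * m) :=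
    fun z hz l => abs_projAlong_le_of_mem_cylZ hf hM.le (hκ l)
      (abs_projAlong_le_of_abs_div_sub_le hw0' (hw ▸ abs_apply_le_euclNorm w 0) (ha l)) h0 hdir
      hstraight hz
  calc _ ≤ ((projLatticeCube b a ((4 + 3 * κ) * M * (ε * m))).card : ℝ) :=
        Nat.cast_le.mpr (ncard_lineAlong_le (by positivity)
          (projAlong_int_image_subset (by omega) a hproj))
    _ ≤ b * (2 * ((4 + 3 * κ) * M * (ε * m)) + 1) ^ d :=
        card_projLatticeCube_le b a (by positivity)
    _ ≤ b * (C * (ε * m)) ^ d := by gcongr; nlinarith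
    _ = C ^ d * m ^ d / ((b : ℝ) ^ (d - 1) * (N : ℝ) ^ d) :=
        mul_pow_one_div_mul_eq hd (by positivity) (by positivity)
end
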